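/- arXiv:2101.04150 — 11 statements merged into one kernel-verified Lean document; each statement's English description precedes it below -/
import Mathlib

section
/- Let R = (r_1,...,r_m) and S = (s_1,...,s_n) be nonnegative integral vectors. Then R and S are the row sum and column sum vectors, respectively, of some sign-restricted matrix of size m × n if and only if S is a (0,1)-vector and the sum of the r_i equals the sum of the s_j. Moreover, in that case the matrix can be taken to be a (0,1)-matrix. -/
/-!
Let `t_k = r_1 + ⋯ + r_k` and `c_k = s_1 + ⋯ + s_k`. Cut the integer interval `[0, t_m) = [0, c_n)`
once into the consecutive blocks `[t_{i-1}, t_i)` of lengths `r_i` (the rows) and once into the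
blocks `[c_{j-1}, c_j)` of lengths `s_j ∈ {0, 1}` (the columns), and let `a_ij` be the number of
integers the `i`-th row block shares with the `j`-th column block. Then every entry, and every
partial column sum `#([0, t_i) ∩ [c_{j-1}, c_j))`, lies in `{0, 1}`; all entries are nonnegative;
and additivity of the overlap in either block decomposition gives the row and column sums.
Conversely, the full column sums of a sign-restricted matrix are partial column sums, hence
in `{0, 1}`, and both sum vectors add up to the sum of all entries.
-/

open Finset

/-- A sign-restricted matrix: entries in {0,1,-1}, every partial column sum
(from row 1 down) equals 0 or 1, every partial row sum (from column 1) is nonnegative. -/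
def IsSRM {m n : ℕ} (A : Matrix (Fin m) (Fin n) ℤ) : Prop :=
  (∀ i j, A i j = 0 ∨ A i j = 1 ∨ A i j = -1) ∧
  (∀ i j, (∑ k ∈ Finset.Iic i, A k j) = 0 ∨ (∑ k ∈ Finset.Iic i, A k j) = 1) ∧
  (∀ i j, 0 ≤ ∑ l ∈ Finset.Iic j, A i l)

/-- The number of integers in `[a, b) ∩ [c, d)`. -/
def intervalOverlap (a b c d : ℤ) : ℤ := max 0 (min b d - max a c)

section intervalOverlap

variable {a b c d e : ℤ}

lemma intervalOverlap_comm (a b c d : ℤ) : intervalOverlap a b c d = intervalOverlap c d a b := by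
  simp only [intervalOverlap, min_comm, max_comm]

lemma intervalOverlap_nonneg (a b c d : ℤ) : 0 ≤ intervalOverlap a b c d := le_max_left _ _

lemma intervalOverlap_add (hab : a ≤ b) (hbe : b ≤ e) :
    intervalOverlap a b c d + intervalOverlap b e c d = intervalOverlap a e c d := by
  simp only [intervalOverlap]
  omega

lemma intervalOverlap_of_le (hca : c ≤ a) (hab : a ≤ b) (hbd : b ≤ d) :
    intervalOverlap a b c d = b - a := by
  simp only [intervalOverlap]
  omega

lemma intervalOverlap_eq_zero_or_one (hcd : d ≤ c + 1) :
    intervalOverlap a b c d = 0 ∨ intervalOverlap a b c d = 1 := by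
  simp only [intervalOverlap]
  omega

lemma sum_range_intervalOverlap {t : ℕ → ℤ} (ht : Monotone t) (c d : ℤ) (N : ℕ) :
    ∑ k ∈ range N, intervalOverlap (t k) (t (k + 1)) c d = intervalOverlap (t 0) (t N) c d := by
  induction N with
  | zero => simp [intervalOverlap]
  | succ N ih =>
    rw [sum_range_succ, ih, intervalOverlap_add (ht (Nat.zero_le N)) (ht N.le_succ)]

lemma sum_fin_intervalOverlap_left {t : ℕ → ℤ} (ht : Monotone t) (c d : ℤ) (N : ℕ) :
    ∑ k : Fin N, intervalOverlap (t k) (t (k + 1)) c d = intervalOverlap (t 0) (t N) c d := by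
  rw [Fin.sum_univ_eq_sum_range (fun k => intervalOverlap (t k) (t (k + 1)) c d),
    sum_range_intervalOverlap ht]

lemma sum_fin_intervalOverlap_right {t : ℕ → ℤ} (ht : Monotone t) (a b : ℤ) (N : ℕ) :
    ∑ k : Fin N, intervalOverlap a b (t k) (t (k + 1)) = intervalOverlap a b (t 0) (t N) := by
  simpa only [intervalOverlap_comm _ _ a b] using sum_fin_intervalOverlap_left ht a b N

end intervalOverlap

lemma Fin.sum_Iic_eq_sum_range {M : Type*} [AddCommMonoid M] {m : ℕ} (i : Fin m) (f : ℕ → M) :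
    ∑ k ∈ Iic i, f k = ∑ k ∈ range (i + 1), f k := by
  rw [Nat.range_succ_eq_Iic, ← Fin.map_valEmbedding_Iic, sum_map]
  rfl

/-- Entries beyond the length of `R` count as `0`. -/
def prefixSum {m : ℕ} (R : Fin m → ℤ) (k : ℕ) : ℤ :=
  ∑ i ∈ range k, if h : i < m then R ⟨i, h⟩ else 0

section prefixSum

variable {m : ℕ} (R : Fin m → ℤ)

@[simp]
lemma prefixSum_zero : prefixSum R 0 = 0 := by simp [prefixSum]

lemma prefixSum_succ (i : Fin m) : prefixSum R (i + 1) = prefixSum R i + R i := by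
  simp [prefixSum, sum_range_succ]

lemma prefixSum_length : prefixSum R m = ∑ i, R i := (sum_fin_eq_sum_range R).symm

variable {R}

lemma prefixSum_monotone (hR : ∀ i, 0 ≤ R i) : Monotone (prefixSum R) := by
  refine monotone_nat_of_le_succ fun k => ?_
  simp only [prefixSum, sum_range_succ, le_add_iff_nonneg_right]
  split_ifs
  exacts [hR _, le_rfl]

lemma prefixSum_nonneg (hR : ∀ i, 0 ≤ R i) (k : ℕ) : 0 ≤ prefixSum R k :=
  prefixSum_zero R ▸ prefixSum_monotone hR k.zero_le

end prefixSum

def overlapMatrix {m n : ℕ} (R : Fin m → ℤ) (S : Fin n → ℤ) : Matrix (Fin m) (Fin n) ℤ :=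
  fun i j => intervalOverlap (prefixSum R i) (prefixSum R (i + 1)) (prefixSum S j)
    (prefixSum S (j + 1))

section overlapMatrix

variable {m n : ℕ} {R : Fin m → ℤ} {S : Fin n → ℤ}

lemma nonneg_of_forall_eq_zero_or_one (hS : ∀ j, S j = 0 ∨ S j = 1) (j : Fin n) : 0 ≤ S j := by
  rcases hS j with h | h <;> omega

lemma prefixSum_succ_le_add_one (hS : ∀ j, S j = 0 ∨ S j = 1) (j : Fin n) :
    prefixSum S (j + 1) ≤ prefixSum S j + 1 := by
  rw [prefixSum_succ]
  rcases hS j with h | h <;> omega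

lemma overlapMatrix_eq_zero_or_one (hS : ∀ j, S j = 0 ∨ S j = 1) (i : Fin m) (j : Fin n) :
    overlapMatrix R S i j = 0 ∨ overlapMatrix R S i j = 1 :=
  intervalOverlap_eq_zero_or_one (prefixSum_succ_le_add_one hS j)

variable (hR : ∀ i, 0 ≤ R i) (hS : ∀ j, S j = 0 ∨ S j = 1)
include hR hS

lemma sum_overlapMatrix_row (hsum : ∑ i, R i = ∑ j, S j) (i : Fin m) :
    ∑ j, overlapMatrix R S i j = R i := by
  have hR_mono := prefixSum_monotone hR
  unfold overlapMatrix
  rw [sum_fin_intervalOverlap_right (prefixSum_monotone (nonneg_of_forall_eq_zero_or_one hS)),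
    prefixSum_zero, prefixSum_length, ← hsum, ← prefixSum_length,
    intervalOverlap_of_le (prefixSum_nonneg hR _) (hR_mono i.val.le_succ) (hR_mono i.isLt),
    prefixSum_succ, add_sub_cancel_left]

lemma sum_overlapMatrix_col (hsum : ∑ i, R i = ∑ j, S j) (j : Fin n) :
    ∑ i, overlapMatrix R S i j = S j := by
  have hS₀ := nonneg_of_forall_eq_zero_or_one hS
  have hS_mono := prefixSum_monotone hS₀
  unfold overlapMatrix
  rw [sum_fin_intervalOverlap_left (prefixSum_monotone hR), prefixSum_zero, prefixSum_length, hsum,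
    ← prefixSum_length, intervalOverlap_comm,
    intervalOverlap_of_le (prefixSum_nonneg hS₀ _) (hS_mono j.val.le_succ) (hS_mono j.isLt),
    prefixSum_succ, add_sub_cancel_left]

end overlapMatrix

lemma IsSRM.sum_col_eq_zero_or_one {m n : ℕ} {A : Matrix (Fin m) (Fin n) ℤ} (hA : IsSRM A)
    (j : Fin n) : ∑ i, A i j = 0 ∨ ∑ i, A i j = 1 := by
  cases m with
  | zero => simp
  | succ m => simpa [← Fin.top_eq_last, Iic_top] using hA.2.1 (Fin.last m) j

lemma isSRM_overlapMatrix {m n : ℕ} {R : Fin m → ℤ} {S : Fin n → ℤ} (hR : ∀ i, 0 ≤ R i)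
    (hS : ∀ j, S j = 0 ∨ S j = 1) : IsSRM (overlapMatrix R S) := by
  refine ⟨fun i j => (overlapMatrix_eq_zero_or_one hS i j).imp_right .inl, fun i j => ?_,
    fun i j => sum_nonneg fun l _ => intervalOverlap_nonneg _ _ _ _⟩
  have hcol : ∑ k ∈ Iic i, overlapMatrix R S k j =
      intervalOverlap 0 (prefixSum R (i + 1)) (prefixSum S j) (prefixSum S (j + 1)) := by
    unfold overlapMatrix
    rw [Fin.sum_Iic_eq_sum_range i (fun k => intervalOverlap (prefixSum R k)
      (prefixSum R (k + 1)) (prefixSum S j) (prefixSum S (j + 1))),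
      sum_range_intervalOverlap (prefixSum_monotone hR), prefixSum_zero]
  exact hcol ▸ intervalOverlap_eq_zero_or_one (prefixSum_succ_le_add_one hS j)

lemma exists_isSRM_of_sums {m n : ℕ} {R : Fin m → ℤ} {S : Fin n → ℤ} (hR : ∀ i, 0 ≤ R i)
    (hS : ∀ j, S j = 0 ∨ S j = 1) (hsum : ∑ i, R i = ∑ j, S j) :
    ∃ A : Matrix (Fin m) (Fin n) ℤ, IsSRM A ∧ (∀ i j, A i j = 0 ∨ A i j = 1) ∧
      (∀ i, ∑ j, A i j = R i) ∧ (∀ j, ∑ i, A i j = S j) :=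
  ⟨overlapMatrix R S, isSRM_overlapMatrix hR hS, overlapMatrix_eq_zero_or_one hS,
    sum_overlapMatrix_row hR hS hsum, sum_overlapMatrix_col hR hS hsum⟩

theorem stmt0_general (m n : ℕ) (R : Fin m → ℤ) (S : Fin n → ℤ)
    (hR : ∀ i, 0 ≤ R i) :
    ((∃ A : Matrix (Fin m) (Fin n) ℤ, IsSRM A ∧ (∀ i, ∑ j, A i j = R i) ∧
        (∀ j, ∑ i, A i j = S j)) ↔
      ((∀ j, S j = 0 ∨ S j = 1) ∧ ∑ i, R i = ∑ j, S j)) ∧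
    (((∀ j, S j = 0 ∨ S j = 1) ∧ ∑ i, R i = ∑ j, S j) →
      ∃ A : Matrix (Fin m) (Fin n) ℤ, IsSRM A ∧ (∀ i j, A i j = 0 ∨ A i j = 1) ∧
        (∀ i, ∑ j, A i j = R i) ∧ (∀ j, ∑ i, A i j = S j)) := by
  refine ⟨⟨fun ⟨A, hA, hrow, hcol⟩ => ⟨fun j => hcol j ▸ hA.sum_col_eq_zero_or_one j, ?_⟩,
    fun ⟨hS, hsum⟩ => ?_⟩, fun ⟨hS, hsum⟩ => exists_isSRM_of_sums hR hS hsum⟩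
  · simp only [← hrow, ← hcol]
    exact sum_comm
  · obtain ⟨A, hA, -, hrow, hcol⟩ := exists_isSRM_of_sums hR hS hsum
    exact ⟨A, hA, hrow, hcol⟩

/-- R and S are the row and column sum vectors of an m×n SRM iff
S is a (0,1)-vector and the sums agree; moreover the SRM can be taken to be a (0,1)-matrix. -/
theorem stmt0 (m n : ℕ) (R : Fin m → ℤ) (S : Fin n → ℤ)
    (hR : ∀ i, 0 ≤ R i) (hS : ∀ j, 0 ≤ S j) :
    ((∃ A : Matrix (Fin m) (Fin n) ℤ, IsSRM A ∧ (∀ i, ∑ j, A i j = R i) ∧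
        (∀ j, ∑ i, A i j = S j)) ↔
      ((∀ j, S j = 0 ∨ S j = 1) ∧ ∑ i, R i = ∑ j, S j)) ∧
    (((∀ j, S j = 0 ∨ S j = 1) ∧ ∑ i, R i = ∑ j, S j) →
      ∃ A : Matrix (Fin m) (Fin n) ℤ, IsSRM A ∧ (∀ i j, A i j = 0 ∨ A i j = 1) ∧
        (∀ i, ∑ j, A i j = R i) ∧ (∀ j, ∑ i, A i j = S j)) :=
  stmt0_general m n R S hR
end

section
/- For an m × n sign-restricted matrix, the difference between the number of entries equal to 1 and the number of entries equal to -1 is at most n, and this bound is attained (e.g., by the matrix whose first row is all ones and all other entries are 0). -/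
open Finset

lemma card_filter_eq_one_sub_card_filter_eq_neg_one {ι : Type*} [Fintype ι] (f : ι → ℤ)
    (hf : ∀ x, f x = 0 ∨ f x = 1 ∨ f x = -1) :
    ((univ.filter (fun x => f x = 1)).card : ℤ) - ((univ.filter (fun x => f x = -1)).card : ℤ) =
      ∑ x, f x := by
  have hsplit : ∀ x, f x = (if f x = 1 then 1 else 0) - (if f x = -1 then 1 else 0) := fun x => by
    rcases hf x with h | h | h <;> simp [h]
  rw [sum_congr rfl fun x _ => hsplit x, sum_sub_distrib, sum_boole, sum_boole]

namespace IsSRM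

variable {m n : ℕ} {A : Matrix (Fin m) (Fin n) ℤ}

lemma sum_col_le_one (hA : IsSRM A) (j : Fin n) : ∑ i, A i j ≤ 1 := by
  cases m with
  | zero => simp
  | succ m =>
    have hcol := hA.2.1 ⊤ j
    rw [Finset.Iic_top] at hcol
    rcases hcol with h | h <;> omega

lemma sum_le (hA : IsSRM A) : ∑ p : Fin m × Fin n, A p.1 p.2 ≤ n :=
  calc ∑ p : Fin m × Fin n, A p.1 p.2 = ∑ j, ∑ i, A i j := Fintype.sum_prod_type_right _
    _ ≤ ∑ _j : Fin n, 1 := sum_le_sum fun j _ => hA.sum_col_le_one j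
    _ = n := by simp

end IsSRM

def firstRowOnes (m n : ℕ) (hm : 0 < m) : Matrix (Fin m) (Fin n) ℤ :=
  Matrix.of fun i _ => if i = ⟨0, hm⟩ then 1 else 0

lemma isSRM_firstRowOnes (m n : ℕ) (hm : 0 < m) : IsSRM (firstRowOnes m n hm) := by
  refine ⟨fun i j => ?_, fun i j => Or.inr ?_, fun i j => sum_nonneg fun l _ => ?_⟩
  · by_cases h : i = ⟨0, hm⟩ <;> simp [firstRowOnes, h]
  · simp [firstRowOnes, sum_ite_eq', Fin.le_def]
  · by_cases h : i = ⟨0, hm⟩ <;> simp [firstRowOnes, h]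

lemma sum_firstRowOnes (m n : ℕ) (hm : 0 < m) :
    ∑ p : Fin m × Fin n, firstRowOnes m n hm p.1 p.2 = n := by
  rw [Fintype.sum_prod_type]
  simp [firstRowOnes]

/-- (#1's) − (#(−1)'s) of an m×n SRM is at most n, and the bound is attained
(for m ≥ 1). -/
theorem stmt3 (m n : ℕ) (hm : 0 < m) :
    (∀ A : Matrix (Fin m) (Fin n) ℤ, IsSRM A →
      ((Finset.univ.filter (fun p : Fin m × Fin n => A p.1 p.2 = 1)).card : ℤ) -
        ((Finset.univ.filter (fun p : Fin m × Fin n => A p.1 p.2 = -1)).card : ℤ) ≤ n) ∧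
    (∃ A : Matrix (Fin m) (Fin n) ℤ, IsSRM A ∧
      ((Finset.univ.filter (fun p : Fin m × Fin n => A p.1 p.2 = 1)).card : ℤ) -
        ((Finset.univ.filter (fun p : Fin m × Fin n => A p.1 p.2 = -1)).card : ℤ) = n) := by
  have hcount : ∀ A : Matrix (Fin m) (Fin n) ℤ, IsSRM A →
      ((univ.filter (fun p : Fin m × Fin n => A p.1 p.2 = 1)).card : ℤ) -
        ((univ.filter (fun p : Fin m × Fin n => A p.1 p.2 = -1)).card : ℤ) =
        ∑ p : Fin m × Fin n, A p.1 p.2 :=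
    fun A hA => card_filter_eq_one_sub_card_filter_eq_neg_one _ fun p => hA.1 p.1 p.2
  refine ⟨fun A hA => (hcount A hA).trans_le hA.sum_le, firstRowOnes m n hm,
    isSRM_firstRowOnes m n hm, ?_⟩
  rw [hcount _ (isSRM_firstRowOnes m n hm), sum_firstRowOnes]
end

section
/- Let A be a sign-restricted matrix containing at least one entry equal to −1. Choose (i,j) with a_{ij} = −1 and i + j minimal among positions of −1's. Then there exist k < i with a_{kj} = 1 and l < j with a_{il} = 1 such that a_{kl} = 0, and the matrix A' obtained from A by adding the 2 × 2 matrix [[1,−1],[−1,1]] to the submatrix of A with rows k,i and columns l,j is again a sign-restricted matrix with the same row and column sum vectors as A and with exactly one fewer −1 entry. -/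
/-!
By minimality of `i + j`, every entry `A p q` with `p + q < i + j` lies in `{0, 1}`. The `-1` at
`(i, j)` must be compensated in both partial sums ending there, so there is a `1` at some `(k, j)`
above it and a `1` at some `(i, l)` to its left. Column `l` is nonnegative above row `i` and its
partial sum at row `i` is at most `1 = A i l`, so it vanishes above row `i`; in particular
`A k l = 0`.

The interchange changes partial column sums only in columns `l` and `j` for rows `k ≤ p < i`, where
they move from `0` to `1` and from `1` to `0`, and partial row sums only in rows `k` and `i` for
columns `l ≤ q < j`, by `+1` and `-1`; there row `i` has partial sum at least `A i l = 1`. All full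
row and column sums are unchanged.
-/

open Finset

namespace Matrix

variable {m n : Type*} [DecidableEq m] [DecidableEq n]

section Ring

variable {R : Type*} [Ring R]

/-- Adds `E = [[1, -1], [-1, 1]]` on rows `k, i` and columns `l, j`; swapping `k` and `i`
subtracts it instead. -/
def interchange (A : Matrix m n R) (k i : m) (l j : n) : Matrix m n R :=
  A + vecMulVec (Pi.single k 1 - Pi.single i 1) (Pi.single l 1 - Pi.single j 1)

variable {A : Matrix m n R} {k i : m} {l j : n}

theorem interchange_apply (p : m) (q : n) :
    A.interchange k i l j p q =
      A p q +
        (Pi.single k 1 - Pi.single i 1 : m → R) p * (Pi.single l 1 - Pi.single j 1 : n → R) q :=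
  rfl

theorem interchange_apply_eq_ite (hki : k ≠ i) (hlj : l ≠ j) (p : m) (q : n) :
    A.interchange k i l j p q =
      A p q + (if (p = k ∧ q = l) ∨ (p = i ∧ q = j) then 1 else 0)
        - (if (p = k ∧ q = j) ∨ (p = i ∧ q = l) then 1 else 0) := by
  simp only [interchange_apply, Pi.sub_apply, Pi.single_apply]
  by_cases hpk : p = k <;> by_cases hpi : p = i <;> by_cases hql : q = l <;>
    by_cases hqj : q = j <;> simp_all [sub_eq_add_neg]

theorem sum_col_interchange (S : Finset m) (q : n) :
    ∑ p ∈ S, A.interchange k i l j p q = ∑ p ∈ S, A p q +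
      ((if k ∈ S then 1 else 0) - (if i ∈ S then 1 else 0)) *
        (Pi.single l 1 - Pi.single j 1 : n → R) q := by
  simp only [interchange_apply, Finset.sum_add_distrib, ← Finset.sum_mul, Finset.sum_sub_distrib,
    Pi.sub_apply, Finset.sum_pi_single']

theorem sum_row_interchange (p : m) (S : Finset n) :
    ∑ q ∈ S, A.interchange k i l j p q = ∑ q ∈ S, A p q +
      (Pi.single k 1 - Pi.single i 1 : m → R) p *
        ((if l ∈ S then 1 else 0) - (if j ∈ S then 1 else 0)) := by
  simp only [interchange_apply, Finset.sum_add_distrib, ← Finset.mul_sum, Finset.sum_sub_distrib,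
    Pi.sub_apply, Finset.sum_pi_single']

theorem sum_col_interchange_univ [Fintype m] (q : n) :
    ∑ p, A.interchange k i l j p q = ∑ p, A p q := by
  simp [sum_col_interchange]

theorem sum_row_interchange_univ [Fintype n] (p : m) :
    ∑ q, A.interchange k i l j p q = ∑ q, A p q := by
  simp [sum_row_interchange]

theorem interchange_apply_cases (hki : k ≠ i) (hlj : l ≠ j) (P : m → n → R → Prop)
    (hkl : P k l (A k l + 1)) (hkj : P k j (A k j - 1)) (hil : P i l (A i l - 1))
    (hij : P i j (A i j + 1)) (hoff : ∀ p q, (p ≠ k ∧ p ≠ i) ∨ (q ≠ l ∧ q ≠ j) → P p q (A p q))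
    (p : m) (q : n) : P p q (A.interchange k i l j p q) := by
  simp only [interchange_apply, Pi.sub_apply, Pi.single_apply]
  by_cases hpk : p = k <;> by_cases hpi : p = i <;> by_cases hql : q = l <;>
    by_cases hqj : q = j <;> simp_all [sub_eq_add_neg]

end Ring

theorem card_filter_interchange_eq_neg_one_add_one [Fintype m] [Fintype n] {A : Matrix m n ℤ}
    {k i : m} {l j : n} (hki : k ≠ i) (hlj : l ≠ j)
    (hkl : A k l = 0) (hkj : A k j = 1) (hil : A i l = 1) (hij : A i j = -1) :
    (univ.filter (fun pq : m × n => A.interchange k i l j pq.1 pq.2 = -1)).card + 1 =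
      (univ.filter (fun pq : m × n => A pq.1 pq.2 = -1)).card := by
  have herase : univ.filter (fun pq : m × n => A.interchange k i l j pq.1 pq.2 = -1) =
      (univ.filter (fun pq : m × n => A pq.1 pq.2 = -1)).erase (i, j) := by
    ext ⟨p, q⟩
    simpa [and_comm] using interchange_apply_cases hki hlj
      (fun p q x => x = -1 ↔ A p q = -1 ∧ (p, q) ≠ (i, j)) (by simp [hkl]) (by simp [hkj])
      (by simp [hil]) (by simp [hij]) (fun p q h => by aesop) p q
  rw [herase, card_erase_add_one (by simp [hij])]

end Matrix

theorem Finset.exists_eq_one_of_sum_pos {ι : Type*} {S : Finset ι} {f : ι → ℤ}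
    (hf : ∀ t ∈ S, f t ≤ 1) (h : 0 < ∑ t ∈ S, f t) : ∃ t ∈ S, f t = 1 := by
  obtain ⟨t, ht, hpos⟩ := exists_lt_of_sum_lt (f := fun _ => 0) (g := f) (by simpa using h)
  exact ⟨t, ht, le_antisymm (hf t ht) hpos⟩

namespace IsSRM

variable {m n : ℕ} {A : Matrix (Fin m) (Fin n) ℤ}

theorem le_one (hA : IsSRM A) (p : Fin m) (q : Fin n) : A p q ≤ 1 := by
  rcases hA.1 p q with h | h | h <;> omega

theorem nonneg_of_ne_neg_one (hA : IsSRM A) {p : Fin m} {q : Fin n} (h : A p q ≠ -1) :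
    0 ≤ A p q := by
  rcases hA.1 p q with h | h | h <;> omega

theorem exists_one_above_of_eq_neg_one (hA : IsSRM A) {i : Fin m} {j : Fin n}
    (hij : A i j = -1) : ∃ k < i, A k j = 1 := by
  obtain ⟨k, hk, hkj⟩ : ∃ k ∈ Iio i, A k j = 1 := by
    refine exists_eq_one_of_sum_pos (fun t _ => hA.le_one t j) ?_
    have := sum_Iio_add_eq_sum_Iic (f := fun t => A t j) i
    rcases hA.2.1 i j with h | h <;> simp only [hij] at this <;> omega
  exact ⟨k, mem_Iio.1 hk, hkj⟩

theorem exists_one_left_of_eq_neg_one (hA : IsSRM A) {i : Fin m} {j : Fin n}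
    (hij : A i j = -1) : ∃ l < j, A i l = 1 := by
  obtain ⟨l, hl, hil⟩ : ∃ l ∈ Iio j, A i l = 1 := by
    refine exists_eq_one_of_sum_pos (fun t _ => hA.le_one i t) ?_
    have := sum_Iio_add_eq_sum_Iic (f := fun t => A i t) j
    have := hA.2.2 i j
    simp only [hij] at *
    omega
  exact ⟨l, mem_Iio.1 hl, hil⟩

theorem eq_zero_above_of_eq_one (hA : IsSRM A) {i : Fin m} {l : Fin n} (hil : A i l = 1)
    (hnn : ∀ t < i, 0 ≤ A t l) : ∀ t < i, A t l = 0 := by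
  have hnn' : ∀ t ∈ Iio i, 0 ≤ A t l := fun t ht => hnn t (mem_Iio.1 ht)
  have hsum := sum_Iio_add_eq_sum_Iic (f := fun t => A t l) i
  simp only [hil] at hsum
  have hzero : ∑ t ∈ Iio i, A t l = 0 := by
    refine le_antisymm ?_ (sum_nonneg hnn')
    rcases hA.2.1 i l with h | h <;> linarith
  exact fun t ht => (sum_eq_zero_iff_of_nonneg hnn').1 hzero t (mem_Iio.2 ht)

theorem sum_Iic_col_eq_one_of_eq_one (hA : IsSRM A) {k i : Fin m} {j : Fin n} (hkj : A k j = 1)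
    (hnn : ∀ t < i, 0 ≤ A t j) (p : Fin m) (hkp : k ≤ p) (hpi : p < i) :
    ∑ t ∈ Iic p, A t j = 1 := by
  refine (hA.2.1 p j).resolve_left fun h0 => ?_
  have := single_le_sum (f := fun t => A t j)
    (fun t ht => hnn t ((mem_Iic.1 ht).trans_lt hpi)) (mem_Iic.2 hkp)
  simp only [h0, hkj] at this
  omega

theorem interchange (hA : IsSRM A) {k i : Fin m} {l j : Fin n} (hki : k < i) (hlj : l < j)
    (hkl : A k l = 0) (hkj : A k j = 1) (hil : A i l = 1) (hij : A i j = -1)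
    (hcol_l : ∀ p, k ≤ p → p < i → ∑ t ∈ Iic p, A t l = 0)
    (hcol_j : ∀ p, k ≤ p → p < i → ∑ t ∈ Iic p, A t j = 1)
    (hrow_i : ∀ q, l ≤ q → q < j → 1 ≤ ∑ t ∈ Iic q, A i t) :
    IsSRM (A.interchange k i l j) := by
  refine ⟨Matrix.interchange_apply_cases hki.ne hlj.ne (fun _ _ x => x = 0 ∨ x = 1 ∨ x = -1)
    (by simp [hkl]) (by simp [hkj]) (by simp [hil]) (by simp [hij]) (fun p q _ => hA.1 p q),
    fun p q => ?_, fun p q => ?_⟩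
  · rw [Matrix.sum_col_interchange]
    simp only [mem_Iic]
    by_cases hkp : k ≤ p
    · by_cases hip : i ≤ p
      · simpa [hkp, hip] using hA.2.1 p q
      have hpi := not_le.mp hip
      rcases eq_or_ne q l with rfl | hql
      · simp [hkp, hip, hcol_l p hkp hpi, hlj.ne']
      rcases eq_or_ne q j with rfl | hqj
      · simp [hkp, hip, hcol_j p hkp hpi, hlj.ne]
      simpa [hkp, hip, hql, hqj] using hA.2.1 p q
    · have hip : ¬ i ≤ p := fun h => hkp (hki.le.trans h)
      simpa [hkp, hip] using hA.2.1 p q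
  · rw [Matrix.sum_row_interchange]
    simp only [mem_Iic]
    have h := hA.2.2 p q
    by_cases hlq : l ≤ q
    · by_cases hjq : j ≤ q
      · simpa [hlq, hjq] using h
      have hqj := not_le.mp hjq
      rcases eq_or_ne p k with rfl | hpk
      · simpa [hlq, hjq, hki.ne] using add_nonneg h zero_le_one
      rcases eq_or_ne p i with rfl | hpi
      · simp [hlq, hjq, hki.ne', hrow_i q hlq hqj]
      simpa [hlq, hjq, hpk, hpi] using h
    · have hjq : ¬ j ≤ q := fun h => hlq (hlj.le.trans h)
      simpa [hlq, hjq] using h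

end IsSRM

/-- given a top-left −1 in an SRM, there is an interchange removing it
and keeping the SRM property and the row/column sums. -/
theorem stmt7 (m n : ℕ) (A : Matrix (Fin m) (Fin n) ℤ) (hA : IsSRM A)
    (i : Fin m) (j : Fin n) (hij : A i j = -1)
    (hmin : ∀ (p : Fin m) (q : Fin n), A p q = -1 → (i : ℕ) + (j : ℕ) ≤ (p : ℕ) + (q : ℕ)) :
    ∃ (k : Fin m) (l : Fin n), k < i ∧ l < j ∧ A k j = 1 ∧ A i l = 1 ∧ A k l = 0 ∧
      (let A' : Matrix (Fin m) (Fin n) ℤ := fun p q =>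
        A p q + (if (p = k ∧ q = l) ∨ (p = i ∧ q = j) then 1 else 0)
              - (if (p = k ∧ q = j) ∨ (p = i ∧ q = l) then 1 else 0)
       IsSRM A' ∧
       (∀ p, ∑ q, A' p q = ∑ q, A p q) ∧
       (∀ q, ∑ p, A' p q = ∑ p, A p q) ∧
       (Finset.univ.filter (fun pq : Fin m × Fin n => A' pq.1 pq.2 = -1)).card + 1 =
         (Finset.univ.filter (fun pq : Fin m × Fin n => A pq.1 pq.2 = -1)).card) := by
  have hnn : ∀ (p : Fin m) (q : Fin n), (p : ℕ) + q < i + j → 0 ≤ A p q := fun p q h =>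
    hA.nonneg_of_ne_neg_one fun h' => (hmin p q h').not_gt h
  obtain ⟨k, hk, hkj⟩ := hA.exists_one_above_of_eq_neg_one hij
  obtain ⟨l, hl, hil⟩ := hA.exists_one_left_of_eq_neg_one hij
  have hcol_l := hA.eq_zero_above_of_eq_one hil fun t ht => hnn t l (by omega)
  have hkl := hcol_l k hk
  refine ⟨k, l, hk, hl, hkj, hil, hkl, ?_⟩
  intro A'
  have hA' : A' = A.interchange k i l j :=
    funext₂ fun p q => (Matrix.interchange_apply_eq_ite hk.ne hl.ne p q).symm
  rw [hA']
  refine ⟨hA.interchange hk hl hkl hkj hil hij ?_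
    (hA.sum_Iic_col_eq_one_of_eq_one hkj fun t ht => hnn t j (by omega)) ?_,
    Matrix.sum_row_interchange_univ, Matrix.sum_col_interchange_univ,
    Matrix.card_filter_interchange_eq_neg_one_add_one hk.ne hl.ne hkl hkj hil hij⟩
  · exact fun p _ hpi => sum_eq_zero fun t ht => hcol_l t ((mem_Iic.1 ht).trans_lt hpi)
  · refine fun q hlq hqj => hil ▸ single_le_sum (fun t ht => hnn i t ?_) (mem_Iic.2 hlq)
    have := mem_Iic.1 ht
    omega
end

section
/- For any m × n sign-restricted matrix A there exists a finite sequence of sign-restricted matrices A = A^(1), A^(2), ..., A^(k), each obtained from the previous by an interchange, such that A^(k) is a (0,1)-matrix with the same row sum vector and column sum vector as A. -/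
/-!
Induction on the number of `-1` entries. Let `i₀` be the first row containing a `-1`, say at
column `j₀`; the rows above it are `(0,1)`-rows. Since the partial column sums are `0` or `1`,
column `j₀` sums to `1` above row `i₀`, and since the partial row sums are nonnegative, row `i₀`
sums to at least `1` left of column `j₀`. Let `i₁` be the last `1` above `(i₀, j₀)` and `j₁` the
last `1` to its left. The interchange on rows `i₀, i₁` and columns `j₀, j₁` clears the `-1` at
`(i₀, j₀)` and the two `1`s, puts a `1` at `(i₁, j₁)`, and moves partial sums by `±1` only where
they can afford it: column `j₀` sums are `1` and column `j₁` sums are `0` on rows `[i₁, i₀)`, and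
row `i₀` sums are at least `1` on columns `[j₁, j₀)`.
-/

open Finset

/-- An interchange: add or subtract E = [[1,-1],[-1,1]] in a 2×2 submatrix. -/
def Interchange {m n : ℕ} (A B : Matrix (Fin m) (Fin n) ℤ) : Prop :=
  ∃ (i i' : Fin m) (j j' : Fin n) (ε : ℤ), i ≠ i' ∧ j ≠ j' ∧ (ε = 1 ∨ ε = -1) ∧
    B = fun p q => A p q + ε *
      ((if p = i ∧ q = j then 1 else 0) - (if p = i ∧ q = j' then 1 else 0)
        - (if p = i' ∧ q = j then 1 else 0) + (if p = i' ∧ q = j' then 1 else 0))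

open Matrix Relation

section PartialSums

variable {α : Type*} [LinearOrder α] [LocallyFiniteOrderBot α]

lemma exists_lt_eq_one_and_one_le_sum_Iic {g : α → ℤ} (hg : ∀ x, g x ≤ 1) {p : α}
    (hp : 1 ≤ ∑ x ∈ Iio p, g x) :
    ∃ q < p, g q = 1 ∧ ∀ l, q ≤ l → l < p → 1 ≤ ∑ x ∈ Iic l, g x := by
  classical
  have hne : ((Iio p).filter (g · = 1)).Nonempty := by
    by_contra h
    rw [not_nonempty_iff_eq_empty, filter_eq_empty_iff] at h
    have : ∑ x ∈ Iio p, g x ≤ 0 := sum_nonpos fun x hx => by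
      have := hg x
      have := h hx
      omega
    omega
  obtain ⟨q, hq, hq_max⟩ := exists_max_image _ id hne
  rw [mem_filter, mem_Iio] at hq
  refine ⟨q, hq.1, hq.2, fun l hql hlp => ?_⟩
  have : ∑ x ∈ Iio p \ Iic l, g x ≤ 0 := sum_nonpos fun x hx => by
    rw [mem_sdiff, mem_Iio, mem_Iic, not_le] at hx
    have h1 : g x ≠ 1 := fun h1 =>
      (hq_max x (mem_filter.2 ⟨mem_Iio.2 hx.1, h1⟩)).not_gt (hql.trans_lt hx.2)
    have := hg x
    omega
  rw [← sum_sdiff fun _ hx => mem_Iio.2 ((mem_Iic.1 hx).trans_lt hlp)] at hp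
  omega

lemma sum_Iic_eq_zero_of_sum_Iio_nonpos {g : α → ℤ} {p : α} (hg : ∀ x < p, 0 ≤ g x)
    (hp : ∑ x ∈ Iio p, g x ≤ 0) {r : α} (hr : r < p) : ∑ x ∈ Iic r, g x = 0 :=
  le_antisymm
    ((sum_le_sum_of_subset_of_nonneg (fun _ hx => mem_Iio.2 ((mem_Iic.1 hx).trans_lt hr))
      fun x hx _ => hg x (mem_Iio.1 hx)).trans hp)
    (sum_nonneg fun x hx => hg x ((mem_Iic.1 hx).trans_lt hr))

lemma eq_zero_or_eq_one_or_eq_neg_one_of_sum_Iic [PredOrder α] {f : α → ℤ}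
    (hf : ∀ i, ∑ k ∈ Iic i, f k = 0 ∨ ∑ k ∈ Iic i, f k = 1) (i : α) :
    f i = 0 ∨ f i = 1 ∨ f i = -1 := by
  have hlt : ∑ k ∈ Iio i, f k = 0 ∨ ∑ k ∈ Iio i, f k = 1 := by
    by_cases hi : IsMin i
    · simp [hi.finsetIio_eq]
    · rw [← Iic_pred_eq_Iio_of_not_isMin hi]
      exact hf _
  have := sum_Iio_add_eq_sum_Iic (f := f) i
  have := hf i
  omega

end PartialSums

section InterchangeMatrix

variable {ι κ : Type*} [DecidableEq ι] [DecidableEq κ]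

def interchangeMatrix (i i' : ι) (j j' : κ) : Matrix ι κ ℤ :=
  vecMulVec (Pi.single i 1 - Pi.single i' 1) (Pi.single j 1 - Pi.single j' 1)

lemma neg_interchangeMatrix (i i' : ι) (j j' : κ) :
    -interchangeMatrix i i' j j' = interchangeMatrix i' i j j' := by
  rw [interchangeMatrix, interchangeMatrix, ← neg_vecMulVec, neg_sub]

lemma sum_single_sub_single (s : Finset ι) (a b : ι) :
    ∑ x ∈ s, (Pi.single a 1 - Pi.single b 1 : ι → ℤ) x =
      (if a ∈ s then 1 else 0) - (if b ∈ s then 1 else 0) := by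
  simp [sum_sub_distrib, sum_pi_single']

lemma sum_add_interchangeMatrix_apply_col (A : Matrix ι κ ℤ) (i i' : ι) (j j' : κ)
    (s : Finset ι) (q : κ) :
    ∑ p ∈ s, (A + interchangeMatrix i i' j j') p q = ∑ p ∈ s, A p q +
      ((if i ∈ s then 1 else 0) - (if i' ∈ s then 1 else 0)) *
        (Pi.single j 1 - Pi.single j' 1 : κ → ℤ) q := by
  simp only [Matrix.add_apply, sum_add_distrib, interchangeMatrix, vecMulVec_apply, ← sum_mul,
    sum_single_sub_single]

lemma sum_add_interchangeMatrix_apply_row (A : Matrix ι κ ℤ) (i i' : ι) (j j' : κ)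
    (p : ι) (s : Finset κ) :
    ∑ q ∈ s, (A + interchangeMatrix i i' j j') p q = ∑ q ∈ s, A p q +
      (Pi.single i 1 - Pi.single i' 1 : ι → ℤ) p *
        ((if j ∈ s then 1 else 0) - (if j' ∈ s then 1 else 0)) := by
  simp only [Matrix.add_apply, sum_add_distrib, interchangeMatrix, vecMulVec_apply, ← mul_sum,
    sum_single_sub_single]

end InterchangeMatrix

lemma interchange_iff {m n : ℕ} {A B : Matrix (Fin m) (Fin n) ℤ} :
    Interchange A B ↔ ∃ (i i' : Fin m) (j j' : Fin n), i ≠ i' ∧ j ≠ j' ∧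
      B = A + interchangeMatrix i i' j j' := by
  have hpattern : ∀ (i i' : Fin m) (j j' : Fin n) (ε : ℤ),
      (fun p q => A p q + ε *
        ((if p = i ∧ q = j then 1 else 0) - (if p = i ∧ q = j' then 1 else 0)
          - (if p = i' ∧ q = j then 1 else 0) + (if p = i' ∧ q = j' then 1 else 0))) =
        A + ε • interchangeMatrix i i' j j' := by
    intro i i' j j' ε
    ext p q
    simp only [Matrix.add_apply, Matrix.smul_apply, interchangeMatrix, vecMulVec_apply,
      Pi.sub_apply, Pi.single_apply, smul_eq_mul]
    split_ifs <;> simp_all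
  constructor
  · rintro ⟨i, i', j, j', ε, hi, hj, rfl | rfl, rfl⟩
    · exact ⟨i, i', j, j', hi, hj, by rw [hpattern, one_smul]⟩
    · exact ⟨i', i, j, j', hi.symm, hj, by rw [hpattern, neg_smul, one_smul, neg_interchangeMatrix]⟩
  · rintro ⟨i, i', j, j', hi, hj, rfl⟩
    exact ⟨i, i', j, j', 1, hi, hj, Or.inl rfl, by rw [hpattern, one_smul]⟩

section SRM

variable {m n : ℕ}

lemma Interchange.sum_row_eq {A B : Matrix (Fin m) (Fin n) ℤ} (h : Interchange A B) (p : Fin m) :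
    ∑ q, B p q = ∑ q, A p q := by
  obtain ⟨i, i', j, j', -, -, rfl⟩ := interchange_iff.1 h
  rw [sum_add_interchangeMatrix_apply_row]
  simp

lemma Interchange.sum_col_eq {A B : Matrix (Fin m) (Fin n) ℤ} (h : Interchange A B) (q : Fin n) :
    ∑ p, B p q = ∑ p, A p q := by
  obtain ⟨i, i', j, j', -, -, rfl⟩ := interchange_iff.1 h
  rw [sum_add_interchangeMatrix_apply_col]
  simp

lemma isSRM_of_sum_Iic {A : Matrix (Fin m) (Fin n) ℤ}
    (hcol : ∀ i j, ∑ k ∈ Iic i, A k j = 0 ∨ ∑ k ∈ Iic i, A k j = 1)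
    (hrow : ∀ i j, 0 ≤ ∑ l ∈ Iic j, A i l) : IsSRM A :=
  ⟨fun i j => eq_zero_or_eq_one_or_eq_neg_one_of_sum_Iic (hcol · j) i, hcol, hrow⟩

lemma IsSRM.add_interchangeMatrix {A : Matrix (Fin m) (Fin n) ℤ} (hA : IsSRM A)
    {i₀ i₁ : Fin m} {j₀ j₁ : Fin n} (hi : i₁ < i₀) (hj : j₁ < j₀)
    (hcol₀ : ∀ r, i₁ ≤ r → r < i₀ → ∑ k ∈ Iic r, A k j₀ = 1)
    (hcol₁ : ∀ r, i₁ ≤ r → r < i₀ → ∑ k ∈ Iic r, A k j₁ = 0)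
    (hrow₀ : ∀ c, j₁ ≤ c → c < j₀ → 1 ≤ ∑ l ∈ Iic c, A i₀ l) :
    IsSRM (A + interchangeMatrix i₀ i₁ j₀ j₁) := by
  refine isSRM_of_sum_Iic (fun r q => ?_) (fun p c => ?_)
  · rw [sum_add_interchangeMatrix_apply_col]
    simp only [mem_Iic, Pi.sub_apply, Pi.single_apply]
    have := hA.2.1 r q
    rcases lt_or_ge r i₁ with hr₁ | hr₁
    · simpa [hr₁.not_ge, (hr₁.trans hi).not_ge] using this
    rcases lt_or_ge r i₀ with hr₀ | hr₀
    · have := hcol₀ r hr₁ hr₀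
      have := hcol₁ r hr₁ hr₀
      simp only [hr₁, hr₀.not_ge, if_true, if_false]
      split_ifs <;> subst_vars <;> omega
    · simpa [hr₀, hr₁] using this
  · rw [sum_add_interchangeMatrix_apply_row]
    simp only [mem_Iic, Pi.sub_apply, Pi.single_apply]
    have := hA.2.2 p c
    rcases lt_or_ge c j₁ with hc₁ | hc₁
    · simpa [hc₁.not_ge, (hc₁.trans hj).not_ge] using this
    rcases lt_or_ge c j₀ with hc₀ | hc₀
    · have := hrow₀ c hc₁ hc₀
      simp only [hc₁, hc₀.not_ge, if_true, if_false]
      split_ifs <;> subst_vars <;> omega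
    · simpa [hc₀, hc₁] using this

end SRM

section NegEntries

variable {ι κ : Type*} [Fintype ι] [Fintype κ] [DecidableEq ι] [DecidableEq κ]

def negEntries (A : Matrix ι κ ℤ) : Finset (ι × κ) := {x | A x.1 x.2 = -1}

lemma negEntries_add_interchangeMatrix_ssubset {A : Matrix ι κ ℤ} {i₀ i₁ : ι} {j₀ j₁ : κ}
    (hi : i₀ ≠ i₁) (hj : j₀ ≠ j₁) (h₀₀ : A i₀ j₀ = -1) (h₀₁ : A i₀ j₁ = 1) (h₁₀ : A i₁ j₀ = 1)
    (h₁₁ : 0 ≤ A i₁ j₁) :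
    negEntries (A + interchangeMatrix i₀ i₁ j₀ j₁) ⊂ negEntries A := by
  refine ssubset_iff_of_subset (fun x hx => ?_) |>.2 ⟨(i₀, j₀), ?_, ?_⟩
  · simp only [negEntries, mem_filter, mem_univ, true_and, Matrix.add_apply, interchangeMatrix,
      vecMulVec_apply, Pi.sub_apply, Pi.single_apply] at hx ⊢
    split_ifs at hx <;> subst_vars <;> omega
  · simpa [negEntries] using h₀₀
  · simp [negEntries, interchangeMatrix, vecMulVec_apply, Pi.single_apply, hi, hj, h₀₀]

end NegEntries

section Reduction

variable {m n : ℕ}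

lemma IsSRM.exists_interchange_negEntries_ssubset {A : Matrix (Fin m) (Fin n) ℤ} (hA : IsSRM A)
    (hneg : (negEntries A).Nonempty) :
    ∃ B, Interchange A B ∧ IsSRM B ∧ negEntries B ⊂ negEntries A := by
  obtain ⟨hE, hC, hR⟩ := hA
  have hle : ∀ i j, A i j ≤ 1 := fun i j => by rcases hE i j with h | h | h <;> omega
  obtain ⟨⟨p, q⟩, hpq⟩ := hneg
  obtain ⟨i₀, ⟨j₀, h₀₀⟩, hi₀_min⟩ :=
    wellFounded_lt.has_min {i | ∃ j, A i j = -1} ⟨p, q, by simpa [negEntries] using hpq⟩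
  have habove : ∀ p < i₀, ∀ q, 0 ≤ A p q := fun p hp q => by
    rcases hE p q with h | h | h
    · omega
    · omega
    · exact absurd hp (hi₀_min p ⟨q, h⟩)
  obtain ⟨i₁, hi, h₁₀, hcol₀⟩ := exists_lt_eq_one_and_one_le_sum_Iic (hle · j₀) (p := i₀) (by
    have := hC i₀ j₀
    rw [← sum_Iio_add_eq_sum_Iic] at this
    omega)
  obtain ⟨j₁, hj, h₀₁, hrow₀⟩ := exists_lt_eq_one_and_one_le_sum_Iic (hle i₀ ·) (p := j₀) (by
    have := hR i₀ j₀
    rw [← sum_Iio_add_eq_sum_Iic] at this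
    omega)
  have hcol₁ : ∀ r < i₀, ∑ k ∈ Iic r, A k j₁ = 0 :=
    fun r hr => sum_Iic_eq_zero_of_sum_Iio_nonpos (habove · · j₁) (by
      have := hC i₀ j₁
      rw [← sum_Iio_add_eq_sum_Iic] at this
      omega) hr
  refine ⟨_, interchange_iff.2 ⟨i₀, i₁, j₀, j₁, hi.ne', hj.ne', rfl⟩, ?_,
    negEntries_add_interchangeMatrix_ssubset hi.ne' hj.ne' h₀₀ h₀₁ h₁₀ (habove i₁ hi j₁)⟩
  refine IsSRM.add_interchangeMatrix ⟨hE, hC, hR⟩ hi hj (fun r hr₁ hr₀ => ?_)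
    (fun r _ hr₀ => hcol₁ r hr₀) hrow₀
  have := hcol₀ r hr₁ hr₀
  have := hC r j₀
  omega

theorem IsSRM.exists_reflTransGen_zeroOne {A : Matrix (Fin m) (Fin n) ℤ} (hA : IsSRM A) :
    ∃ C, ReflTransGen (fun B C => Interchange B C ∧ IsSRM C) A C ∧
      ∀ i j, C i j = 0 ∨ C i j = 1 := by
  by_cases hneg : (negEntries A).Nonempty
  · obtain ⟨B, hAB, hB, hlt⟩ := hA.exists_interchange_negEntries_ssubset hneg
    obtain ⟨C, hBC, hC⟩ := hB.exists_reflTransGen_zeroOne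
    exact ⟨C, .head ⟨hAB, hB⟩ hBC, hC⟩
  · refine ⟨A, .refl, fun i j => ?_⟩
    rw [not_nonempty_iff_eq_empty, negEntries, filter_eq_empty_iff] at hneg
    rcases hA.1 i j with h | h | h
    · exact .inl h
    · exact .inr h
    · exact absurd h (hneg (mem_univ (i, j)))
termination_by (negEntries A).card
decreasing_by exact card_lt_card hlt

end Reduction

theorem Relation.ReflTransGen.exists_fin_path {α : Type*} {r : α → α → Prop} {a b : α}
    (h : ReflTransGen r a b) :
    ∃ (k : ℕ) (f : Fin (k + 1) → α), f 0 = a ∧ f (Fin.last k) = b ∧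
      ∀ t : Fin k, r (f t.castSucc) (f t.succ) := by
  induction h using Relation.ReflTransGen.head_induction_on with
  | refl => exact ⟨0, fun _ => b, rfl, rfl, Fin.elim0⟩
  | head hac _ ih =>
    obtain ⟨k, f, h0, hlast, hstep⟩ := ih
    refine ⟨k + 1, Fin.cons _ f, rfl, by simpa using hlast, Fin.cases ?_ fun t => ?_⟩
    · simpa [h0] using hac
    · simpa [← Fin.succ_castSucc] using hstep t

lemma Relation.ReflTransGen.sums_eq_of_interchange {m n : ℕ} {A C : Matrix (Fin m) (Fin n) ℤ}
    (h : ReflTransGen Interchange A C) :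
    (∀ i, ∑ j, C i j = ∑ j, A i j) ∧ ∀ j, ∑ i, C i j = ∑ i, A i j := by
  induction h with
  | refl => exact ⟨fun _ => rfl, fun _ => rfl⟩
  | tail _ hBC ih =>
    exact ⟨fun i => (hBC.sum_row_eq i).trans (ih.1 i), fun j => (hBC.sum_col_eq j).trans (ih.2 j)⟩

/-- any SRM can be transformed by a sequence of interchanges, through SRMs,
into a (0,1)-matrix with the same row and column sums. -/
theorem stmt8 (m n : ℕ) (A : Matrix (Fin m) (Fin n) ℤ) (hA : IsSRM A) :
    ∃ (k : ℕ) (F : Fin (k + 1) → Matrix (Fin m) (Fin n) ℤ),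
      F 0 = A ∧
      (∀ t, IsSRM (F t)) ∧
      (∀ t : Fin k, Interchange (F t.castSucc) (F t.succ)) ∧
      (∀ i j, F (Fin.last k) i j = 0 ∨ F (Fin.last k) i j = 1) ∧
      (∀ i, ∑ j, F (Fin.last k) i j = ∑ j, A i j) ∧
      (∀ j, ∑ i, F (Fin.last k) i j = ∑ i, A i j) := by
  obtain ⟨C, hAC, hC⟩ := hA.exists_reflTransGen_zeroOne
  obtain ⟨k, F, h0, hlast, hstep⟩ := hAC.exists_fin_path
  obtain ⟨hrows, hcols⟩ := (ReflTransGen.mono (fun _ _ h => h.1) _ _ hAC).sums_eq_of_interchange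
  refine ⟨k, F, h0, Fin.cases (h0 ▸ hA) fun t => (hstep t).2, fun t => (hstep t).1, ?_, ?_, ?_⟩
  all_goals rwa [hlast]
end

section
/- Let M(S) be the generalized incidence matrix associated with a directed graph D = (V,E) having at least one edge and a subset S ⊆ V. If the rows and columns of M(S) can be ordered so that the resulting matrix is a sign-restricted matrix, then D is acyclic, d⁻(v) − d⁺(v) ≤ 1 for every vertex v, and every vertex v with d⁻(v) = d⁺(v) + 1 belongs to S. -/
open Finset

/-!
Order the vertices by their rows. The column of an edge `(p, q)` has its `+1` in row `p` and its
`-1` in row `q`; since its partial sums never go negative, `p` comes before `q`, so the row order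
is a topological order of `D` and `D` is acyclic. The last partial sum of the row of `u` is the
full row sum `[u ∈ S] + d⁺(u) - d⁻(u)`, which must be nonnegative.
-/

lemma lt_of_sum_Iic_indicator_sub_nonneg {α : Type*} [LinearOrder α] [LocallyFiniteOrderBot α]
    {p q : α} (hpq : p ≠ q)
    (h : 0 ≤ ∑ k ∈ Iic q, ((if k = p then 1 else 0) - (if k = q then 1 else 0) : ℤ)) :
    p < q := by
  rw [sum_sub_distrib, sum_ite_eq', sum_ite_eq'] at h
  refine lt_of_le_of_ne (not_lt.mp fun hqp => ?_) hpq
  simp [hqp.not_ge] at h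

lemma sum_nonneg_of_sum_Iic_nonneg {α : Type*} [Fintype α] [LinearOrder α]
    [LocallyFiniteOrderBot α] (a : α → ℤ) (h : ∀ j, 0 ≤ ∑ l ∈ Iic j, a l) : 0 ≤ ∑ l, a l := by
  rcases isEmpty_or_nonempty α with _ | _
  · simp
  · obtain ⟨j, hj⟩ := Finite.exists_max (id : α → α)
    simpa [show Iic j = univ from eq_univ_of_forall fun l => mem_Iic.mpr (hj l)] using h j

lemma not_exists_closed_walk_of_lt_rank {V ι β : Type*} [Preorder β] (E : ι → V × V)
    (rank : V → β) (hrank : ∀ a, rank (E a).1 < rank (E a).2) :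
    ¬ ∃ (k : ℕ) (c : ℕ → V) (ed : ℕ → ι), 0 < k ∧
      (∀ i < k, E (ed i) = (c i, c (i + 1))) ∧ c k = c 0 := by
  rintro ⟨k, c, ed, hk, hwalk, hclosed⟩
  have hmono : StrictMonoOn (rank ∘ c) (Set.Iic k) :=
    strictMonoOn_Iic_of_lt_succ fun i hi => by
      simpa [hwalk i hi] using hrank (ed i)
  have := hmono (Set.mem_Iic.mpr k.zero_le) (Set.mem_Iic.mpr le_rfl) hk
  simp [hclosed] at this

lemma sum_row_generalizedIncidence {V ι : Type*} [Fintype ι] [DecidableEq V] {E : ι → V × V}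
    {S : Finset V} {M : Matrix V ({u // u ∈ S} ⊕ ι) ℤ}
    (hMS : ∀ u (w : {u // u ∈ S}), M u (Sum.inl w) = if u = w.1 then 1 else 0)
    (hME : ∀ u a, M u (Sum.inr a) =
      (if u = (E a).1 then 1 else 0) - (if u = (E a).2 then 1 else 0)) (u : V) :
    ∑ c, M u c = (if u ∈ S then 1 else 0)
      + ((univ.filter (fun a => (E a).1 = u)).card : ℤ)
      - ((univ.filter (fun a => (E a).2 = u)).card : ℤ) := by
  simp only [Fintype.sum_sum_type, hMS, hME]
  rw [sum_coe_sort S (fun w => if u = w then (1 : ℤ) else 0), sum_ite_eq, sum_sub_distrib]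
  simp only [sum_boole, eq_comm (a := u)]
  ring

theorem stmt9_general (v e : ℕ) (E : Fin e → Fin v × Fin v)
    (hloopless : ∀ a, (E a).1 ≠ (E a).2) (S : Finset (Fin v))
    (M : Matrix (Fin v) ({u // u ∈ S} ⊕ Fin e) ℤ)
    (hMS : ∀ u (w : {u // u ∈ S}), M u (Sum.inl w) = if u = w.1 then 1 else 0)
    (hME : ∀ u a, M u (Sum.inr a) =
      (if u = (E a).1 then 1 else 0) - (if u = (E a).2 then 1 else 0))
    (N : ℕ) (g : ({u // u ∈ S} ⊕ Fin e) ≃ Fin N) (f : Fin v ≃ Fin v)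
    (hSRM : IsSRM (fun i j => M (f i) (g.symm j))) :
    (¬ ∃ (k : ℕ) (c : ℕ → Fin v) (ed : ℕ → Fin e), 0 < k ∧
        (∀ i < k, E (ed i) = (c i, c (i + 1))) ∧ c k = c 0) ∧
    (∀ u : Fin v,
      ((Finset.univ.filter (fun a => (E a).2 = u)).card : ℤ) -
        ((Finset.univ.filter (fun a => (E a).1 = u)).card : ℤ) ≤ 1 ∧
      ((Finset.univ.filter (fun a => (E a).2 = u)).card =
        (Finset.univ.filter (fun a => (E a).1 = u)).card + 1 → u ∈ S)) := by
  obtain ⟨-, hcol, hrow⟩ := hSRM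
  have htopological : ∀ a, f.symm (E a).1 < f.symm (E a).2 := fun a => by
    refine lt_of_sum_Iic_indicator_sub_nonneg (f.symm.injective.ne (hloopless a)) ?_
    have := hcol (f.symm (E a).2) (g (Sum.inr a))
    simp only [Equiv.symm_apply_apply, hME, ← Equiv.eq_symm_apply] at this
    omega
  refine ⟨not_exists_closed_walk_of_lt_rank E f.symm htopological, fun u => ?_⟩
  have hrow_sum := sum_nonneg_of_sum_Iic_nonneg _ (hrow (f.symm u))
  rw [Equiv.sum_comp g.symm (M (f (f.symm u))), Equiv.apply_symm_apply,
    sum_row_generalizedIncidence hMS hME] at hrow_sum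
  refine ⟨by split_ifs at hrow_sum <;> omega, fun hdeg => by_contra fun hu => ?_⟩
  rw [if_neg hu] at hrow_sum
  omega

/-- if the generalized incidence matrix M(S) of a loopless digraph D with at
least one edge can have its rows and columns reordered to form an SRM, then D is acyclic,
d⁻(v) − d⁺(v) ≤ 1 for every vertex v, and d⁻(v) = d⁺(v) + 1 implies v ∈ S. -/
theorem stmt9 (v e : ℕ) (he : 0 < e) (E : Fin e → Fin v × Fin v)
    (hloopless : ∀ a, (E a).1 ≠ (E a).2) (S : Finset (Fin v))
    (M : Matrix (Fin v) ({u // u ∈ S} ⊕ Fin e) ℤ)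
    (hMS : ∀ u (w : {u // u ∈ S}), M u (Sum.inl w) = if u = w.1 then 1 else 0)
    (hME : ∀ u a, M u (Sum.inr a) =
      (if u = (E a).1 then 1 else 0) - (if u = (E a).2 then 1 else 0))
    (N : ℕ) (g : ({u // u ∈ S} ⊕ Fin e) ≃ Fin N) (f : Fin v ≃ Fin v)
    (hSRM : IsSRM (fun i j => M (f i) (g.symm j))) :
    (¬ ∃ (k : ℕ) (c : ℕ → Fin v) (ed : ℕ → Fin e), 0 < k ∧
        (∀ i < k, E (ed i) = (c i, c (i + 1))) ∧ c k = c 0) ∧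
    (∀ u : Fin v,
      ((Finset.univ.filter (fun a => (E a).2 = u)).card : ℤ) -
        ((Finset.univ.filter (fun a => (E a).1 = u)).card : ℤ) ≤ 1 ∧
      ((Finset.univ.filter (fun a => (E a).2 = u)).card =
        (Finset.univ.filter (fun a => (E a).1 = u)).card + 1 → u ∈ S)) :=
  stmt9_general v e E hloopless S M hMS hME N g f hSRM
end

section
/- Let R = (r_1,...,r_m) and S = (s_1,...,s_n) be nonnegative integral vectors with equal sums and S nonincreasing. The class of m × n (0,±1)-matrices with row sum vector R and column sum vector S is nonempty if and only if for every k = 1,...,n: s_1 + ... + s_k ≤ Σ_{i=1}^m min{r_i + n, 2k} − km. -/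
/-!
Adding the all-ones matrix identifies (0,±1)-matrices with row sums `R` and column sums `S` with
(0,1,2)-matrices with row sums `R + n` and column sums `S + m`. For matrices with entries in
`[0, b]` and row sums `ρ`, the column sums `c` are attainable iff `∑ ρ = ∑ c` and every set `T` of
columns satisfies `∑_{j ∈ T} c j ≤ ∑_i min (ρ i) (b * #T)`: this is the cut condition of the
transportation network. For sufficiency, start from any matrix with row sums `ρ` and move single
units along simple chains of columns from an overfull to an underfull column; when no underfull
column is reachable, the unreachable columns form a cut violating the condition. For a
nonincreasing `S` it suffices to check initial segments `T`, which maximise `∑_{j ∈ T} S j` among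
sets of their size.
-/

open Finset

theorem List.exists_nodup_isChain_cons_of_relationReflTransGen {α : Type*} {r : α → α → Prop}
    {a b : α} (h : Relation.ReflTransGen r a b) :
    ∃ l, (a :: l).Nodup ∧ (a :: l).IsChain r ∧ (a :: l).getLast (cons_ne_nil _ _) = b := by
  refine Relation.ReflTransGen.head_induction_on h ⟨[], nodup_singleton b, .singleton b, rfl⟩ ?_
  rintro a c hac - ⟨l, hnd, hch, rfl⟩
  by_cases ha : a ∈ c :: l
  · obtain ⟨s, t, hst⟩ := append_of_mem ha
    rw [hst] at hnd hch
    refine ⟨t, hnd.of_append_right, hch.right_of_append, ?_⟩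
    simp only [hst]
    exact (getLast_append_of_right_ne_nil _ _ (cons_ne_nil a t)).symm
  · exact ⟨c :: l, nodup_cons.2 ⟨ha, hnd⟩, hch.cons_cons hac, getLast_cons_cons⟩

theorem Finset.sum_le_sum_Iic_of_antitone {α M : Type*} [LinearOrder α] [LocallyFiniteOrderBot α]
    [AddCommMonoid M] [PartialOrder M] [IsOrderedAddMonoid M] {f : α → M} (hf : Antitone f)
    {s : Finset α} {k : α} (hs : #s = #(Iic k)) : ∑ x ∈ s, f x ≤ ∑ x ∈ Iic k, f x := by
  calc ∑ x ∈ s, f x = ∑ x ∈ s ∩ Iic k, f x + ∑ x ∈ s \ Iic k, f x :=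
        (sum_inter_add_sum_sdiff _ _ _).symm
    _ ≤ ∑ x ∈ s ∩ Iic k, f x + #(s \ Iic k) • f k := by
        gcongr
        exact sum_le_card_nsmul _ _ _ fun x hx => hf (by grind)
    _ = ∑ x ∈ Iic k ∩ s, f x + #(Iic k \ s) • f k := by rw [inter_comm, card_sdiff_comm hs]
    _ ≤ ∑ x ∈ Iic k, f x := by
        rw [← sum_inter_add_sum_sdiff (Iic k) s]
        gcongr
        exact card_nsmul_le_sum _ _ _ fun x hx => hf (by grind)

theorem Finset.Nonempty.exists_val_add_one_eq_card {n : ℕ} {T : Finset (Fin n)} (hT : T.Nonempty) :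
    ∃ k : Fin n, (k : ℕ) + 1 = #T := by
  have hT0 := hT.card_pos
  have hTn : #T ≤ n := by simpa using card_le_univ T
  exact ⟨⟨#T - 1, by omega⟩, by simp only; omega⟩

namespace CappedMatrix

variable {ι κ : Type*} {b : ℕ}

def CanShift (b : ℕ) (B : Matrix ι κ ℤ) (j j' : κ) : Prop :=
  ∃ i, 0 < B i j ∧ B i j' < b

theorem CanShift.shift [DecidableEq ι] [DecidableEq κ] {B : Matrix ι κ ℤ} {x y : κ}
    (h : CanShift b B x y) (i : ι) {j j' : κ} (hx : x ≠ j) (hy : y ≠ j') :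
    CanShift b (B - Matrix.single i j 1 + Matrix.single i j' 1) x y := by
  obtain ⟨r, hr, hr'⟩ := h
  refine ⟨r, ?_, ?_⟩ <;> simp only [Matrix.add_apply, Matrix.sub_apply, Matrix.single_apply] <;>
    grind

def colSum [Fintype ι] (B : Matrix ι κ ℤ) (j : κ) : ℤ := ∑ i, B i j

theorem colSum_shift [Fintype ι] [DecidableEq ι] [DecidableEq κ] (B : Matrix ι κ ℤ) (i : ι)
    (j j' : κ) :
    colSum (B - Matrix.single i j 1 + Matrix.single i j' 1) =
      colSum B - Pi.single j 1 + Pi.single j' 1 := by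
  ext k
  simp [colSum, Matrix.single_apply, ite_and, sum_add_distrib, sum_sub_distrib, Pi.single_apply,
    eq_comm]

theorem exists_mem_Icc_sum_eq (s : Finset κ) {t : ℤ} (h0 : 0 ≤ t) (ht : t ≤ b * #s) :
    ∃ x : κ → ℤ, (∀ j, x j ∈ Set.Icc 0 (b : ℤ)) ∧ ∑ j ∈ s, x j = t := by
  classical
  induction s using Finset.induction_on generalizing t with
  | empty => exact ⟨0, fun _ => ⟨le_rfl, b.cast_nonneg⟩, by simp_all; omega⟩
  | insert a s ha ih =>
    rw [card_insert_of_notMem ha] at ht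
    obtain ⟨x, hx, hxs⟩ := ih (t := t - min t b) (by omega) (by push_cast at ht; grind)
    refine ⟨Function.update x a (min t b), fun j => ?_, ?_⟩
    · rcases eq_or_ne j a with rfl | hja
      · simp; omega
      · simpa [hja] using hx j
    · rw [sum_insert ha, sum_update_of_notMem ha, hxs, Function.update_self]
      ring

section

variable [Fintype κ] {ρ : ι → ℤ} {c : κ → ℤ} {B : Matrix ι κ ℤ}

def Admissible (b : ℕ) (ρ : ι → ℤ) (B : Matrix ι κ ℤ) : Prop :=
  (∀ i j, B i j ∈ Set.Icc 0 (b : ℤ)) ∧ ∀ i, ∑ j, B i j = ρ i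

theorem exists_admissible (h0 : ∀ i, 0 ≤ ρ i) (hb : ∀ i, ρ i ≤ b * Fintype.card κ) :
    ∃ B : Matrix ι κ ℤ, Admissible b ρ B := by
  choose B hB using fun i => exists_mem_Icc_sum_eq univ (h0 i) (hb i)
  exact ⟨B, fun i => (hB i).1, fun i => (hB i).2⟩

theorem Admissible.sum_le_min (hB : Admissible b ρ B) (i : ι) (T : Finset κ) :
    ∑ j ∈ T, B i j ≤ min (ρ i) (b * #T) := by
  refine le_min ?_ ?_
  · rw [← hB.2 i]
    exact sum_le_sum_of_subset_of_nonneg (subset_univ T) fun j _ _ => (hB.1 i j).1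
  · simpa [mul_comm] using sum_le_card_nsmul T (B i) b fun j _ => (hB.1 i j).2

theorem Admissible.shift [DecidableEq ι] [DecidableEq κ] (hB : Admissible b ρ B) {i : ι}
    {j j' : κ} (hj : 0 < B i j) (hj' : B i j' < b) :
    Admissible b ρ (B - Matrix.single i j 1 + Matrix.single i j' 1) := by
  refine ⟨fun r k => ?_, fun r => ?_⟩
  · have := hB.1 r k
    simp only [Matrix.add_apply, Matrix.sub_apply, Matrix.single_apply, Set.mem_Icc] at this ⊢
    split_ifs <;> grind
  · simp [Matrix.single_apply, ite_and, sum_add_distrib, sum_sub_distrib, hB.2 r]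

def deviation [Fintype ι] (B : Matrix ι κ ℤ) (c : κ → ℤ) : ℕ :=
  ∑ j, (colSum B j - c j).natAbs

theorem sum_natAbs_shift_lt [DecidableEq κ] {f : κ → ℤ} {s d : κ} (hs : c s < f s)
    (hd : f d < c d) :
    ∑ j, ((f - Pi.single s 1 + Pi.single d 1 : κ → ℤ) j - c j).natAbs <
      ∑ j, (f j - c j).natAbs := by
  have hsd : s ≠ d := by rintro rfl; omega
  refine sum_lt_sum (fun j _ => ?_) ⟨s, mem_univ s, ?_⟩
  · rcases eq_or_ne j s with rfl | hjs
    · simp [hsd]; omega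
    · rcases eq_or_ne j d with rfl | hjd
      · simp [hjs]; omega
      · simp [hjs, hjd]
  · simp [hsd]; omega

variable [Fintype ι]

theorem Admissible.sum_colSum (hB : Admissible b ρ B) : ∑ j, colSum B j = ∑ i, ρ i := by
  simp only [colSum, ← hB.2]
  exact sum_comm

theorem Admissible.sum_colSum_le_sum_min (hB : Admissible b ρ B) (T : Finset κ) :
    ∑ j ∈ T, colSum B j ≤ ∑ i, min (ρ i) (b * #T) := by
  simp only [colSum]
  rw [sum_comm]
  exact sum_le_sum fun i _ => hB.sum_le_min i T

/-- A row with a positive entry outside `V` is full on `V`, since that unit cannot be shifted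
into `V`; any other row has all its weight in `V`. -/
theorem Admissible.sum_min_le_sum_colSum (hB : Admissible b ρ B) {V : Finset κ}
    (hV : ∀ x ∉ V, ∀ y ∈ V, ¬CanShift b B x y) :
    ∑ i, min (ρ i) (b * #V) ≤ ∑ j ∈ V, colSum B j := by
  simp only [colSum]
  rw [sum_comm]
  refine sum_le_sum fun i _ => ?_
  by_cases hout : ∃ x ∉ V, 0 < B i x
  · obtain ⟨x, hxV, hx⟩ := hout
    have hfull : ∀ y ∈ V, B i y = b := fun y hy =>
      le_antisymm (hB.1 i y).2 (not_lt.1 fun hlt => hV x hxV y hy ⟨i, hx, hlt⟩)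
    rw [sum_congr rfl hfull, sum_const, nsmul_eq_mul, mul_comm]
    exact min_le_right _ _
  · push Not at hout
    have hzero : ∀ x ∈ univ, x ∉ V → B i x = 0 := fun x _ hx =>
      le_antisymm (hout x hx) (hB.1 i x).1
    rw [sum_subset (subset_univ V) hzero, hB.2 i]
    exact min_le_left _ _

/-- A shifted unit leaves the later columns of a simple chain shiftable, because it only lowers
the chain's first column and raises its second. -/
theorem Admissible.exists_shift_of_isChain [DecidableEq ι] [DecidableEq κ]
    (hB : Admissible b ρ B) {a : κ} {l : List κ} (hnd : (a :: l).Nodup)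
    (hch : (a :: l).IsChain (CanShift b B)) :
    ∃ B', Admissible b ρ B' ∧
      colSum B' = colSum B - Pi.single a 1 + Pi.single ((a :: l).getLast (by simp)) 1 := by
  induction l generalizing a B with
  | nil => exact ⟨B, hB, by simp⟩
  | cons c l ih =>
    obtain ⟨⟨i, hi, hi'⟩, hch⟩ := List.isChain_cons_cons.1 hch
    obtain ⟨ha, hnd⟩ := List.nodup_cons.1 hnd
    have hch' : (c :: l).IsChain (CanShift b (B - Matrix.single i a 1 + Matrix.single i c 1)) :=
      hch.imp_of_mem_tail_imp fun x y hx hy hxy =>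
        hxy.shift i (by rintro rfl; exact ha hx) (by rintro rfl; exact (List.nodup_cons.1 hnd).1 hy)
    obtain ⟨B', hB', hcol⟩ := ih (hB.shift hi hi') hnd hch'
    refine ⟨B', hB', ?_⟩
    rw [hcol, colSum_shift, List.getLast_cons_cons]
    abel

theorem Admissible.exists_shift_of_reflTransGen [DecidableEq ι] [DecidableEq κ]
    (hB : Admissible b ρ B) {a d : κ} (h : Relation.ReflTransGen (CanShift b B) a d) :
    ∃ B', Admissible b ρ B' ∧ colSum B' = colSum B - Pi.single a 1 + Pi.single d 1 := by
  obtain ⟨l, hnd, hch, rfl⟩ := List.exists_nodup_isChain_cons_of_relationReflTransGen h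
  exact hB.exists_shift_of_isChain hnd hch

/-- If every column reachable from an overfull column were at least full, the unreachable
columns would form a cut violating `hc`. -/
theorem Admissible.exists_reflTransGen_deficit (hB : Admissible b ρ B)
    (hsum : ∑ i, ρ i = ∑ j, c j) (hc : ∀ T : Finset κ, ∑ j ∈ T, c j ≤ ∑ i, min (ρ i) (b * #T))
    (hne : colSum B ≠ c) :
    ∃ s d, c s < colSum B s ∧ colSum B d < c d ∧ Relation.ReflTransGen (CanShift b B) s d := by
  classical
  have htotal : ∑ j, (colSum B j - c j) = 0 := by
    rw [sum_sub_distrib, hB.sum_colSum, hsum, sub_self]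
  obtain ⟨j, hj⟩ := Function.ne_iff.1 hne
  obtain ⟨s, -, hs⟩ := exists_pos_of_sum_zero_of_exists_nonzero _ htotal
    ⟨j, mem_univ j, sub_ne_zero.2 hj⟩
  set U := univ.filter fun y => ∃ s, c s < colSum B s ∧ Relation.ReflTransGen (CanShift b B) s y
  by_contra! hnodef
  have hU : ∀ y ∈ U, 0 ≤ colSum B y - c y := fun y hy => by
    obtain ⟨s, hs, hsy⟩ := (mem_filter.1 hy).2
    exact sub_nonneg.2 (not_lt.1 fun hlt => hnodef s y hs hlt hsy)
  have hcut := hB.sum_min_le_sum_colSum (V := Uᶜ) fun x hx y hy hxy => by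
    obtain ⟨s, hs, hsx⟩ := (mem_filter.1 (notMem_compl.1 hx)).2
    exact mem_compl.1 hy (mem_filter.2 ⟨mem_univ y, s, hs, hsx.tail hxy⟩)
  have hsU : s ∈ U := mem_filter.2 ⟨mem_univ s, s, sub_pos.1 hs, .refl⟩
  have hpos : 0 < ∑ j ∈ U, (colSum B j - c j) :=
    hs.trans_le (single_le_sum (f := fun j => colSum B j - c j) hU hsU)
  rw [← sum_add_sum_compl U] at htotal
  linarith [hc Uᶜ, sum_sub_distrib (s := Uᶜ) (f := colSum B) (g := c)]

theorem Admissible.exists_colSum_eq [DecidableEq ι] [DecidableEq κ] (hB : Admissible b ρ B)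
    (hsum : ∑ i, ρ i = ∑ j, c j) (hc : ∀ T : Finset κ, ∑ j ∈ T, c j ≤ ∑ i, min (ρ i) (b * #T)) :
    ∃ B', Admissible b ρ B' ∧ colSum B' = c := by
  induction hD : deviation B c using Nat.strong_induction_on generalizing B with
  | _ N ih =>
    by_cases hne : colSum B = c
    · exact ⟨B, hB, hne⟩
    obtain ⟨s, d, hs, hd, hsd⟩ := hB.exists_reflTransGen_deficit hsum hc hne
    obtain ⟨B', hB', hcol⟩ := hB.exists_shift_of_reflTransGen hsd
    refine ih _ ?_ hB' rfl
    rw [← hD, deviation, deviation, hcol]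
    exact sum_natAbs_shift_lt hs hd

theorem exists_admissible_colSum_eq_iff :
    (∃ B : Matrix ι κ ℤ, Admissible b ρ B ∧ colSum B = c) ↔
      ∑ i, ρ i = ∑ j, c j ∧ ∀ T : Finset κ, ∑ j ∈ T, c j ≤ ∑ i, min (ρ i) (b * #T) := by
  classical
  constructor
  · rintro ⟨B, hB, rfl⟩
    exact ⟨hB.sum_colSum.symm, hB.sum_colSum_le_sum_min⟩
  · rintro ⟨hsum, hc⟩
    have h0 : ∀ i, 0 ≤ ρ i := by
      have hmin := (sum_eq_zero_iff_of_nonpos fun i _ => min_le_right (ρ i) 0).1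
        (le_antisymm (sum_nonpos fun i _ => min_le_right _ _) (by simpa using hc ∅))
      exact fun i => min_eq_right_iff.1 (hmin i (mem_univ i))
    have hb : ∀ i, ρ i ≤ b * Fintype.card κ := by
      have hmin := (sum_eq_sum_iff_of_le fun i _ => min_le_left (ρ i) (b * #(univ : Finset κ))).1
        (le_antisymm (sum_le_sum fun i _ => min_le_left _ _) (hsum ▸ hc univ))
      exact fun i => card_univ (α := κ) ▸ min_eq_left_iff.1 (hmin i (mem_univ i))
    obtain ⟨B, hB⟩ := exists_admissible h0 hb
    exact hB.exists_colSum_eq hsum hc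

end

end CappedMatrix

open CappedMatrix in
theorem exists_signMatrix_iff_exists_admissible {ι κ : Type*} [Fintype ι] [Fintype κ]
    {R : ι → ℤ} {S : κ → ℤ} :
    (∃ A : Matrix ι κ ℤ, (∀ i j, A i j = 0 ∨ A i j = 1 ∨ A i j = -1) ∧
        (∀ i, ∑ j, A i j = R i) ∧ ∀ j, ∑ i, A i j = S j) ↔
      ∃ B : Matrix ι κ ℤ, Admissible 2 (fun i => R i + Fintype.card κ) B ∧
        colSum B = fun j => S j + Fintype.card ι := by
  constructor
  · rintro ⟨A, hA, hrow, hcol⟩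
    refine ⟨Matrix.of fun i j => A i j + 1, ⟨fun i j => ?_, fun i => ?_⟩, funext fun j => ?_⟩
    · rcases hA i j with h | h | h <;> simp [h]
    · simp [sum_add_distrib, hrow]
    · simp [colSum, sum_add_distrib, hcol]
  · rintro ⟨B, ⟨hB, hrow⟩, hcol⟩
    refine ⟨Matrix.of fun i j => B i j - 1, fun i j => ?_, fun i => ?_, fun j => ?_⟩
    · have := hB i j
      simp only [Set.mem_Icc, Nat.cast_ofNat] at this
      simp only [Matrix.of_apply]
      omega
    · simp [sum_sub_distrib, hrow]
    · have hj := congrFun hcol j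
      simp only [colSum] at hj
      simp [sum_sub_distrib, hj]

theorem stmt10_general (m n : ℕ) (R : Fin m → ℤ) (S : Fin n → ℤ)
    (hR : ∀ i, 0 ≤ R i) (hsum : ∑ i, R i = ∑ j, S j)
    (hmono : Antitone S) :
    (∃ A : Matrix (Fin m) (Fin n) ℤ, (∀ i j, A i j = 0 ∨ A i j = 1 ∨ A i j = -1) ∧
        (∀ i, ∑ j, A i j = R i) ∧ (∀ j, ∑ i, A i j = S j)) ↔
    (∀ k : Fin n, ∑ j ∈ Finset.Iic k, S j ≤
        (∑ i, min (R i + (n : ℤ)) (2 * ((k : ℕ) + 1))) - ((k : ℕ) + 1) * m) := by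
  rw [exists_signMatrix_iff_exists_admissible, CappedMatrix.exists_admissible_colSum_eq_iff]
  simp only [Fintype.card_fin, Nat.cast_ofNat, sum_add_distrib, sum_const, card_univ, nsmul_eq_mul]
  constructor
  · rintro ⟨-, hT⟩ k
    have := hT (Iic k)
    rw [Fin.card_Iic] at this
    push_cast at this
    linarith
  · intro hk
    refine ⟨by rw [hsum]; ring, fun T => ?_⟩
    rcases T.eq_empty_or_nonempty with rfl | hT
    · simpa using sum_nonneg fun i _ => le_min (by linarith [hR i]) le_rfl
    · obtain ⟨k, hkT⟩ := hT.exists_val_add_one_eq_card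
      have hprefix := sum_le_sum_Iic_of_antitone hmono (s := T) (k := k) (by rw [Fin.card_Iic, hkT])
      rw [← hkT]
      push_cast
      linarith [hk k]

/-- nonemptiness of the class of (0,±1)-matrices with row sums R and
(nonincreasing) column sums S. -/
theorem stmt10 (m n : ℕ) (R : Fin m → ℤ) (S : Fin n → ℤ)
    (hR : ∀ i, 0 ≤ R i) (hS : ∀ j, 0 ≤ S j) (hsum : ∑ i, R i = ∑ j, S j)
    (hmono : Antitone S) :
    (∃ A : Matrix (Fin m) (Fin n) ℤ, (∀ i j, A i j = 0 ∨ A i j = 1 ∨ A i j = -1) ∧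
        (∀ i, ∑ j, A i j = R i) ∧ (∀ j, ∑ i, A i j = S j)) ↔
    (∀ k : Fin n, ∑ j ∈ Finset.Iic k, S j ≤
        (∑ i, min (R i + (n : ℤ)) (2 * ((k : ℕ) + 1))) - ((k : ℕ) + 1) * m) :=
  stmt10_general m n R S hR hsum hmono
end

section
/- The convex hull of the set of n × n (0,±1)-matrices with row sum vector R and column sum vector S equals the polytope of all real n × n matrices A = [a_{ij}] satisfying: each row sum equals r_i, each column sum equals s_j, and −1 ≤ a_{ij} ≤ 1 for all i,j. -/
/-!
A matrix of the polytope with a non-integral entry is not an extreme point. Since its line sums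
are integers, every row and every column containing a non-integral entry contains at least two,
so the set `F` of non-integral positions meets `r ≤ |F| / 2` rows and `c ≤ |F| / 2` columns.
The line sums of a matrix supported on `F` are `r + c` numbers subject to one linear relation
(the row and column totals agree), so some nonzero `D` supported on `F` has zero line sums.
The non-integral entries lie strictly inside `[-1, 1]`, so `A ± εD` stay in the polytope for
small `ε`, and `A` is their midpoint.

Hence the extreme points are `(0, ±1)`-matrices, and the Krein–Milman theorem, together with the
finiteness of the set of `(0, ±1)`-matrices, gives the equality.
-/

open Finset

theorem AddSubgroup.exists_ne_notMem_of_sum_mem {G ι : Type*} [AddCommGroup G] [Fintype ι]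
    [DecidableEq ι] (L : AddSubgroup G) {g : ι → G} (hsum : ∑ j, g j ∈ L) {j₀ : ι}
    (hj₀ : g j₀ ∉ L) : ∃ j ≠ j₀, g j ∉ L := by
  by_contra! h
  have hrest : ∑ j ∈ univ.erase j₀, g j ∈ L := L.sum_mem fun j hj => h j (ne_of_mem_erase hj)
  rw [← add_sum_erase _ _ (mem_univ j₀)] at hsum
  exact hj₀ ((L.add_mem_cancel_right hrest).1 hsum)

theorem Finset.two_mul_card_image_le {ι M : Type*} [DecidableEq M] {s : Finset ι} {f : ι → M}
    (h : ∀ b ∈ s.image f, 2 ≤ #{a ∈ s | f a = b}) : 2 * #(s.image f) ≤ #s := by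
  rw [card_eq_sum_card_image f s, mul_comm, ← smul_eq_mul, ← sum_const]
  exact sum_le_sum h

theorem Matrix.finite_setOf_forall_mem {m n α : Type*} [Finite m] [Finite n] {s : Set α}
    (hs : s.Finite) : {A : Matrix m n α | ∀ i j, A i j ∈ s}.Finite :=
  (Set.Finite.pi fun _ => Set.Finite.pi fun _ => hs).subset fun _ hA i _ j _ => hA i j

instance Matrix.instLocallyConvexSpace {m n : Type*} : LocallyConvexSpace ℝ (Matrix m n ℝ) :=
  inferInstanceAs (LocallyConvexSpace ℝ (m → n → ℝ))

namespace Matrix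

theorem sum_col_eq_zero_of_sum_row_eq_zero {m n α : Type*} [Fintype m] [Fintype n]
    [AddCommMonoid α] {A : Matrix m n α} (hrow : ∀ i, ∑ j, A i j = 0) {j₀ : n}
    (hcol : ∀ j ≠ j₀, ∑ i, A i j = 0) : ∑ i, A i j₀ = 0 :=
  calc ∑ i, A i j₀ = ∑ j, ∑ i, A i j := (sum_eq_single _ (fun j _ => hcol j) (by simp)).symm
    _ = 0 := by rw [sum_comm]; exact sum_eq_zero fun i _ => hrow i

section Kernel

variable {K m n : Type*} [Field K] [Fintype m] [Fintype n] [DecidableEq m] [DecidableEq n]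

theorem exists_ne_zero_lineSums_eq_zero_of_two_le_card (F : Finset (m × n)) (hF : F.Nonempty)
    (hrow : ∀ i ∈ F.image Prod.fst, 2 ≤ #{p ∈ F | p.1 = i})
    (hcol : ∀ j ∈ F.image Prod.snd, 2 ≤ #{p ∈ F | p.2 = j}) :
    ∃ D : Matrix m n K, D ≠ 0 ∧ (∀ i j, (i, j) ∉ F → D i j = 0) ∧
      (∀ i, ∑ j, D i j = 0) ∧ ∀ j, ∑ i, D i j = 0 := by
  obtain ⟨p₀, hp₀⟩ := hF
  set rows := F.image Prod.fst
  -- the sum of column `p₀.2` is determined by the others and the row sums, so it is left out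
  set cols := (F.image Prod.snd).erase p₀.2
  let T : Matrix m n K →ₗ[K] (↥Fᶜ → K) × (↥rows → K) × (↥cols → K) :=
    { toFun D := (fun p => D p.1.1 p.1.2, fun i => ∑ j, D i j, fun j => ∑ i, D i j)
      map_add' D E := by ext <;> simp [sum_add_distrib]
      map_smul' c D := by ext <;> simp [mul_sum] }
  have hdim : Module.finrank K ((↥Fᶜ → K) × (↥rows → K) × (↥cols → K)) <
      Module.finrank K (Matrix m n K) := by
    have hr := two_mul_card_image_le hrow
    have hc := two_mul_card_image_le hcol
    have hF : #F ≤ Fintype.card m * Fintype.card n :=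
      (card_le_univ F).trans_eq (Fintype.card_prod ..)
    have hp₀' : p₀.2 ∈ F.image Prod.snd := mem_image_of_mem _ hp₀
    simp only [Module.finrank_prod, Module.finrank_fintype_fun_eq_card, Fintype.card_coe,
      card_compl, rows, cols, card_erase_of_mem hp₀', Module.finrank_matrix, Module.finrank_self,
      Fintype.card_prod]
    have := card_pos.2 ⟨_, hp₀'⟩
    omega
  obtain ⟨D, hDT, hD0⟩ :=
    (Submodule.ne_bot_iff _).1 (LinearMap.ker_ne_bot_of_finrank_lt (f := T) hdim)
  have hoff : ∀ i j, (i, j) ∉ F → D i j = 0 := fun i j h =>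
    congr_fun (congr_arg Prod.fst hDT) ⟨(i, j), mem_compl.2 h⟩
  have hrow0 : ∀ i, ∑ j, D i j = 0 := by
    intro i
    by_cases hi : i ∈ rows
    · exact congr_fun (congr_arg (·.2.1) hDT) ⟨i, hi⟩
    · exact sum_eq_zero fun j _ => hoff i j fun h => hi (mem_image_of_mem _ h)
  have hcol0 : ∀ j ≠ p₀.2, ∑ i, D i j = 0 := by
    intro j hj
    by_cases hj' : j ∈ F.image Prod.snd
    · exact congr_fun (congr_arg (·.2.2) hDT) ⟨j, mem_erase.2 ⟨hj, hj'⟩⟩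
    · exact sum_eq_zero fun i _ => hoff i j fun h => hj' (mem_image_of_mem _ h)
  refine ⟨D, hD0, hoff, hrow0, fun j => ?_⟩
  obtain rfl | hj := eq_or_ne j p₀.2
  exacts [sum_col_eq_zero_of_sum_row_eq_zero hrow0 hcol0, hcol0 j hj]

theorem exists_ne_zero_lineSums_eq_zero_of_notMem (L : AddSubgroup K) (A : Matrix m n K)
    (hrow : ∀ i, ∑ j, A i j ∈ L) (hcol : ∀ j, ∑ i, A i j ∈ L) {i₀ : m} {j₀ : n}
    (h : A i₀ j₀ ∉ L) :
    ∃ D : Matrix m n K, D ≠ 0 ∧ (∀ i j, A i j ∈ L → D i j = 0) ∧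
      (∀ i, ∑ j, D i j = 0) ∧ ∀ j, ∑ i, D i j = 0 := by
  classical
  set F : Finset (m × n) := {p | A p.1 p.2 ∉ L}
  have hF : ∀ {p}, p ∈ F ↔ A p.1 p.2 ∉ L := by simp [F]
  have hrowF : ∀ i ∈ F.image Prod.fst, 2 ≤ #{p ∈ F | p.1 = i} := by
    intro i hi
    obtain ⟨p, hp, rfl⟩ := mem_image.1 hi
    obtain ⟨j, hj, hjL⟩ := L.exists_ne_notMem_of_sum_mem (hrow p.1) (hF.1 hp)
    exact one_lt_card.2 ⟨p, mem_filter.2 ⟨hp, rfl⟩, (p.1, j), mem_filter.2 ⟨hF.2 hjL, rfl⟩,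
      fun h => hj (congr_arg Prod.snd h).symm⟩
  have hcolF : ∀ j ∈ F.image Prod.snd, 2 ≤ #{p ∈ F | p.2 = j} := by
    intro j hj
    obtain ⟨p, hp, rfl⟩ := mem_image.1 hj
    obtain ⟨i, hi, hiL⟩ := L.exists_ne_notMem_of_sum_mem (hcol p.2) (hF.1 hp)
    exact one_lt_card.2 ⟨p, mem_filter.2 ⟨hp, rfl⟩, (i, p.2), mem_filter.2 ⟨hF.2 hiL, rfl⟩,
      fun h => hi (congr_arg Prod.fst h).symm⟩
  obtain ⟨D, hD0, hDF, hDrow, hDcol⟩ :=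
    exists_ne_zero_lineSums_eq_zero_of_two_le_card (K := K) F ⟨(i₀, j₀), hF.2 h⟩ hrowF hcolF
  exact ⟨D, hD0, fun i j hij => hDF i j fun hF' => hF.1 hF' hij, hDrow, hDcol⟩

end Kernel

section Polytope

variable {m n : Type*} [Fintype m] [Fintype n]

def signedTransportPolytope (r : m → ℝ) (s : n → ℝ) : Set (Matrix m n ℝ) :=
  {A | (∀ i, ∑ j, A i j = r i) ∧ (∀ j, ∑ i, A i j = s j) ∧ ∀ i j, A i j ∈ Set.Icc (-1) 1}

variable {r : m → ℝ} {s : n → ℝ}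

theorem convex_signedTransportPolytope : Convex ℝ (signedTransportPolytope r s) := by
  rintro A ⟨hAr, hAs, hA⟩ B ⟨hBr, hBs, hB⟩ a b ha hb hab
  refine ⟨fun i => ?_, fun j => ?_, fun i j => (convex_Icc (-1 : ℝ) 1) (hA i j) (hB i j) ha hb hab⟩
  · simp [sum_add_distrib, ← mul_sum, hAr, hBr, ← add_mul, hab]
  · simp [sum_add_distrib, ← mul_sum, hAs, hBs, ← add_mul, hab]

theorem isCompact_signedTransportPolytope : IsCompact (signedTransportPolytope r s) := by
  refine (isCompact_univ_pi fun _ => isCompact_univ_pi fun _ => isCompact_Icc).of_isClosed_subset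
    ?_ fun A hA i _ j _ => hA.2.2 i j
  simp only [signedTransportPolytope, Set.ofPred_and, Set.ofPred_forall]
  refine .inter (isClosed_iInter fun i => isClosed_eq (by fun_prop) (by fun_prop)) <|
    .inter (isClosed_iInter fun j => isClosed_eq (by fun_prop) (by fun_prop)) <|
    isClosed_iInter fun i => isClosed_iInter fun j => isClosed_Icc.preimage (by fun_prop)

theorem eventually_add_smul_mem_signedTransportPolytope {A D : Matrix m n ℝ}
    (hA : A ∈ signedTransportPolytope r s) (hDrow : ∀ i, ∑ j, D i j = 0)
    (hDcol : ∀ j, ∑ i, D i j = 0) (hD : ∀ i j, D i j ≠ 0 → A i j ∈ Set.Ioo (-1) 1) :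
    ∀ᶠ t in nhds (0 : ℝ), A + t • D ∈ signedTransportPolytope r s := by
  have hbox : ∀ i j, ∀ᶠ t in nhds (0 : ℝ), A i j + t * D i j ∈ Set.Icc (-1) 1 := by
    intro i j
    by_cases hDij : D i j = 0
    · simp [hDij, hA.2.2 i j]
    · have hcont : Filter.Tendsto (fun t : ℝ => A i j + t * D i j) (nhds 0) (nhds (A i j)) :=
        (continuous_const.add (continuous_id.mul continuous_const)).tendsto' 0 _ (by simp)
      exact (hcont.eventually (isOpen_Ioo.mem_nhds (hD i j hDij))).mono
        fun _ ht => Set.Ioo_subset_Icc_self ht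
  filter_upwards [Filter.eventually_all.2 fun i => Filter.eventually_all.2 (hbox i)] with t ht
  refine ⟨fun i => ?_, fun j => ?_, ht⟩
  · simp [sum_add_distrib, ← mul_sum, hA.1 i, hDrow i]
  · simp [sum_add_distrib, ← mul_sum, hA.2.1 j, hDcol j]

theorem exists_intCast_eq_of_mem_extremePoints (R : m → ℤ) (S : n → ℤ) {A : Matrix m n ℝ}
    (hA : A ∈ (signedTransportPolytope (R ·) (S ·)).extremePoints ℝ) (i : m) (j : n) :
    ∃ z : ℤ, A i j = z := by
  classical
  obtain ⟨hAP, hAext⟩ := hA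
  set L := (Int.castAddHom ℝ).range
  have hL : ∀ {x}, x ∈ L ↔ ∃ z : ℤ, x = z := by
    simp only [L, AddMonoidHom.mem_range, Int.coe_castAddHom]
    exact exists_congr fun _ => eq_comm
  by_contra hij
  obtain ⟨D, hD0, hDL, hDrow, hDcol⟩ := exists_ne_zero_lineSums_eq_zero_of_notMem L A
    (fun i => hL.2 ⟨R i, hAP.1 i⟩) (fun j => hL.2 ⟨S j, hAP.2.1 j⟩) (mt hL.1 hij)
  have hD : ∀ i j, D i j ≠ 0 → A i j ∈ Set.Ioo (-1) 1 := by
    intro i j hDij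
    have hAL : A i j ∉ L := mt (hDL i j) hDij
    exact ⟨(hAP.2.2 i j).1.lt_of_ne fun h => hAL (hL.2 ⟨-1, by simp [← h]⟩),
      (hAP.2.2 i j).2.lt_of_ne fun h => hAL (hL.2 ⟨1, by simp [h]⟩)⟩
  obtain ⟨δ, hδ, hball⟩ := Metric.eventually_nhds_iff.1
    (eventually_add_smul_mem_signedTransportPolytope hAP hDrow hDcol hD)
  have hmem : ∀ t : ℝ, |t| = δ / 2 → A + t • D ∈ signedTransportPolytope (R ·) (S ·) :=
    fun t ht => hball (by rw [Real.dist_0_eq_abs, ht]; linarith)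
  have hseg := mem_openSegment_add_sub (𝕜 := ℝ) A ((δ / 2) • D)
  rw [sub_eq_add_neg, ← neg_smul] at hseg
  have hfix := hAext (hmem _ (abs_of_pos (by positivity))) (hmem _ (by simp [abs_of_pos, hδ])) hseg
  exact hD0 ((smul_eq_zero.1 (add_eq_left.1 hfix)).resolve_left (by positivity))

theorem extremePoints_signedTransportPolytope_subset (R : m → ℤ) (S : n → ℤ) :
    (signedTransportPolytope (R ·) (S ·)).extremePoints ℝ ⊆
      {A | (∀ i j, A i j = 0 ∨ A i j = 1 ∨ A i j = -1) ∧
        (∀ i, ∑ j, A i j = R i) ∧ ∀ j, ∑ i, A i j = S j} := by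
  intro A hA
  refine ⟨fun i j => ?_, hA.1.1, hA.1.2.1⟩
  obtain ⟨z, hz⟩ := exists_intCast_eq_of_mem_extremePoints R S hA i j
  obtain ⟨h₁, h₂⟩ := hA.1.2.2 i j
  rw [hz] at h₁ h₂ ⊢
  have : -1 ≤ z := by exact_mod_cast h₁
  have : z ≤ 1 := by exact_mod_cast h₂
  interval_cases z <;> simp

end Polytope

end Matrix

/-- the convex hull of the n×n (0,±1)-matrices with row sum vector R and
column sum vector S is the polytope given by the row/column sum equations and −1 ≤ a ≤ 1. -/
theorem stmt11 (n : ℕ) (R S : Fin n → ℤ) :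
    convexHull ℝ {A : Matrix (Fin n) (Fin n) ℝ |
        (∀ i j, A i j = 0 ∨ A i j = 1 ∨ A i j = -1) ∧
        (∀ i, ∑ j, A i j = (R i : ℝ)) ∧ (∀ j, ∑ i, A i j = (S j : ℝ))} =
      {A : Matrix (Fin n) (Fin n) ℝ |
        (∀ i, ∑ j, A i j = (R i : ℝ)) ∧ (∀ j, ∑ i, A i j = (S j : ℝ)) ∧
        (∀ i j, -1 ≤ A i j ∧ A i j ≤ 1)} := by
  set V := {A : Matrix (Fin n) (Fin n) ℝ |
    (∀ i j, A i j = 0 ∨ A i j = 1 ∨ A i j = -1) ∧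
    (∀ i, ∑ j, A i j = (R i : ℝ)) ∧ (∀ j, ∑ i, A i j = (S j : ℝ))}
  set P := Matrix.signedTransportPolytope (R ·) (S ·)
  change convexHull ℝ V = P
  have hV : V.Finite := (Matrix.finite_setOf_forall_mem (s := {0, 1, -1}) (Set.toFinite _)).subset
    fun A hA i j => hA.1 i j
  refine subset_antisymm (convexHull_min (fun A hA => ⟨hA.2.1, hA.2.2, fun i j => ?_⟩)
    Matrix.convex_signedTransportPolytope) ?_
  · rcases hA.1 i j with h | h | h <;> simp [h]
  calc P = closure (convexHull ℝ (P.extremePoints ℝ)) :=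
        (closure_convexHull_extremePoints Matrix.isCompact_signedTransportPolytope
          Matrix.convex_signedTransportPolytope).symm
    _ ⊆ closure (convexHull ℝ V) :=
        closure_mono (convexHull_mono (Matrix.extremePoints_signedTransportPolytope_subset R S))
    _ = convexHull ℝ V := (hV.isClosed_convexHull ℝ).closure_eq
end

section
/- Every sign-restricted matrix A ∈ S_{m,n} is the meet (greatest lower bound in the Bruhat order) of a finite set of matrices in S⁺_{m,n}, each having at most one nonzero row; consequently (S_{m,n}, ≤_B) is the Dedekind–MacNeille completion of (S⁺_{m,n}, ≤_B). -/
open Finset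

/-- The sum-matrix: (i,j)-entry is the sum of entries of the leading i×j submatrix. -/
def sumMatrix {m n : ℕ} (A : Matrix (Fin m) (Fin n) ℤ) : Matrix (Fin m) (Fin n) ℤ :=
  fun i j => ∑ p ∈ Finset.Iic i, ∑ q ∈ Finset.Iic j, A p q

/-!
Row `r` of the matrix of partial column sums `c r q = ∑_{k ≤ r} A k q` is a `0/1` vector, so the
matrix `A⁽ʳ⁾` carrying it in row `r` (and zeros elsewhere) lies in `S⁺`. Summing it gives
`Σ(A⁽ʳ⁾) p q = [r ≤ p] · Σ(A) r q`. Nonnegative partial row sums make `Σ(A)` nonnegative and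
monotone in the row index, so `Σ(A⁽ʳ⁾) ≤ Σ(A)`, with equality at row `p = r`. Hence `Σ(A)` is the
entrywise maximum of the `Σ(A⁽ʳ⁾)`, and any upper bound of them dominates `Σ(A)`.
-/

section

variable {m n : ℕ}

def colPartialSum (A : Matrix (Fin m) (Fin n) ℤ) (r : Fin m) (q : Fin n) : ℤ :=
  ∑ k ∈ Iic r, A k q

/-- The paper's `A⁽ʳ⁾`: its `1`s in row `r` sit where `Σ(A) r (q - 1) < Σ(A) r q`. -/
def rowComponent (A : Matrix (Fin m) (Fin n) ℤ) (r : Fin m) : Matrix (Fin m) (Fin n) ℤ :=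
  fun p q => if p = r then colPartialSum A r q else 0

theorem sum_Iic_colPartialSum (A : Matrix (Fin m) (Fin n) ℤ) (r : Fin m) (q : Fin n) :
    ∑ j ∈ Iic q, colPartialSum A r j = sumMatrix A r q :=
  Finset.sum_comm

theorem sumMatrix_rowComponent (A : Matrix (Fin m) (Fin n) ℤ) (r p : Fin m) (q : Fin n) :
    sumMatrix (rowComponent A r) p q = if r ≤ p then sumMatrix A r q else 0 := by
  have hrows : sumMatrix (rowComponent A r) p q =
      ∑ i ∈ Iic p, if i = r then ∑ j ∈ Iic q, colPartialSum A r j else 0 := by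
    refine Finset.sum_congr rfl fun i _ => ?_
    by_cases h : i = r <;> simp [rowComponent, h]
  rw [hrows, Finset.sum_ite_eq' (Iic p) r, sum_Iic_colPartialSum]
  simp only [mem_Iic]

theorem sumMatrix_rowComponent_self (A : Matrix (Fin m) (Fin n) ℤ) (p : Fin m) (q : Fin n) :
    sumMatrix (rowComponent A p) p q = sumMatrix A p q := by
  simp [sumMatrix_rowComponent]

section RowSumsNonneg

variable {A : Matrix (Fin m) (Fin n) ℤ} (hrow : ∀ i j, 0 ≤ ∑ l ∈ Iic j, A i l)
include hrow

theorem sumMatrix_nonneg (p : Fin m) (q : Fin n) : 0 ≤ sumMatrix A p q :=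
  Finset.sum_nonneg fun i _ => hrow i q

theorem sumMatrix_mono_row {i i' : Fin m} (h : i ≤ i') (q : Fin n) :
    sumMatrix A i q ≤ sumMatrix A i' q :=
  Finset.sum_le_sum_of_subset_of_nonneg (Finset.Iic_subset_Iic.mpr h) fun p _ _ => hrow p q

theorem sumMatrix_rowComponent_le (r p : Fin m) (q : Fin n) :
    sumMatrix (rowComponent A r) p q ≤ sumMatrix A p q := by
  rw [sumMatrix_rowComponent]
  split_ifs with h
  · exact sumMatrix_mono_row hrow h q
  · exact sumMatrix_nonneg hrow p q

end RowSumsNonneg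

section ColSumsZeroOne

variable {A : Matrix (Fin m) (Fin n) ℤ}
  (hcol : ∀ i j, colPartialSum A i j = 0 ∨ colPartialSum A i j = 1)
include hcol

theorem rowComponent_eq_zero_or_one (r p : Fin m) (q : Fin n) :
    rowComponent A r p q = 0 ∨ rowComponent A r p q = 1 := by
  by_cases h : p = r
  · simpa [rowComponent, h] using hcol r q
  · simp [rowComponent, h]

theorem isSRM_rowComponent (r : Fin m) : IsSRM (rowComponent A r) := by
  refine ⟨fun i j => ?_, fun i j => ?_, fun i j => ?_⟩
  · rcases rowComponent_eq_zero_or_one hcol r i j with h | h <;> simp [h]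
  · have hsum : ∑ k ∈ Iic i, rowComponent A r k j = if r ∈ Iic i then colPartialSum A r j else 0 :=
      Finset.sum_ite_eq' _ _ _
    rw [hsum]
    split_ifs
    · exact hcol r j
    · simp
  · refine Finset.sum_nonneg fun l _ => ?_
    rcases rowComponent_eq_zero_or_one hcol r i l with h | h <;> simp [h]

end ColSumsZeroOne

theorem eq_of_rowComponent_ne_zero {A : Matrix (Fin m) (Fin n) ℤ} {r p : Fin m} {q : Fin n}
    (h : rowComponent A r p q ≠ 0) : p = r := by
  by_contra hp
  simp [rowComponent, hp] at h

end

/-- every SRM A is the meet (greatest lower bound in the Bruhat order,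
A ≤_B B iff Σ(A) ≥ Σ(B) entrywise) of finitely many (0,1)-SRMs each having at most one
nonzero row; indeed Σ(A) is the entrywise maximum of their sum-matrices. -/
theorem stmt13 (m n : ℕ) (A : Matrix (Fin m) (Fin n) ℤ) (hA : IsSRM A) :
    ∃ (k : ℕ) (F : Fin k → Matrix (Fin m) (Fin n) ℤ),
      (∀ t, IsSRM (F t) ∧ (∀ p q, F t p q = 0 ∨ F t p q = 1) ∧
        ∃ r : Fin m, ∀ p q, F t p q ≠ 0 → p = r) ∧
      (∀ t, ∀ p q, sumMatrix (F t) p q ≤ sumMatrix A p q) ∧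
      (∀ p q, ∃ t, sumMatrix A p q = sumMatrix (F t) p q) ∧
      (∀ D : Matrix (Fin m) (Fin n) ℤ, IsSRM D →
        (∀ t, ∀ p q, sumMatrix (F t) p q ≤ sumMatrix D p q) →
        (∀ p q, sumMatrix A p q ≤ sumMatrix D p q)) := by
  obtain ⟨-, hcol, hrow⟩ := hA
  refine ⟨m, rowComponent A, fun r => ?_, sumMatrix_rowComponent_le hrow, fun p q => ?_, ?_⟩
  · exact ⟨isSRM_rowComponent hcol r, rowComponent_eq_zero_or_one hcol r,
      r, fun _ _ => eq_of_rowComponent_ne_zero⟩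
  · exact ⟨p, (sumMatrix_rowComponent_self A p q).symm⟩
  · intro D _ hle p q
    exact sumMatrix_rowComponent_self A p q ▸ hle p p q
end

section
/- A nonnegative integral m × n matrix S = [s_{ij}] is the sum-matrix of some matrix in S⁺_{m,n} if and only if s_{i,j−1} + s_{i−1,j} − s_{i−1,j−1} ≤ s_{ij} for all i ≤ m, j ≤ n, and s_{mj} ≤ s_{m,j−1} + 1 for all j ≤ n (with the convention s_{0j} = s_{i0} = 0). -/
/-!
Pad `S` with a zero row and column to `s`, so that `s i j` is the paper's `s_{ij}`, and extend `A`
by zeros to `a`. Then `S = Σ(A)` says `s i j = ∑_{p < i, q < j} a p q`, i.e. `a` is the mixed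
second difference of `s`, and summed down a column this difference telescopes to
`s m (q + 1) - s m q`. So the first condition says `a ≥ 0` and the second that every column sum of
`a` is at most `1`; together they force a `(0,1)`-matrix, and a `(0,1)`-matrix is sign-restricted
exactly when its column sums are at most `1`.
-/
open Finset

section CornerSums

variable {G : Type*} [AddCommGroup G]

def cornerSum (a : ℕ → ℕ → G) (i j : ℕ) : G := ∑ p ∈ range i, ∑ q ∈ range j, a p q

def mixedDiff (s : ℕ → ℕ → G) (p q : ℕ) : G :=
  s (p + 1) (q + 1) - s (p + 1) q - s p (q + 1) + s p q

theorem cornerSum_succ_right_sub (a : ℕ → ℕ → G) (i q : ℕ) :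
    cornerSum a i (q + 1) - cornerSum a i q = ∑ p ∈ range i, a p q := by
  simp only [cornerSum, sum_range_succ, sum_add_distrib, add_sub_cancel_left]

theorem mixedDiff_cornerSum (a : ℕ → ℕ → G) (p q : ℕ) :
    mixedDiff (cornerSum a) p q = a p q := by
  simp only [mixedDiff, cornerSum, sum_range_succ]
  abel

theorem sum_range_mixedDiff (s : ℕ → ℕ → G) (i q : ℕ) :
    ∑ p ∈ range i, mixedDiff s p q = (s i (q + 1) - s i q) - (s 0 (q + 1) - s 0 q) := by
  rw [← sum_range_sub (fun p => s p (q + 1) - s p q)]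
  refine sum_congr rfl fun p _ => ?_
  simp only [mixedDiff]
  abel

theorem cornerSum_mixedDiff {s : ℕ → ℕ → G} (h0 : ∀ j, s 0 j = 0) (h0' : ∀ i, s i 0 = 0)
    (i j : ℕ) : cornerSum (mixedDiff s) i j = s i j := by
  rw [cornerSum, sum_comm]
  simp only [sum_range_mixedDiff, h0, sub_zero, sum_range_sub (s i), h0']

end CornerSums

theorem Fin.sum_Iic_val {M : Type*} [AddCommMonoid M] {n : ℕ} (f : ℕ → M) (i : Fin n) :
    ∑ k ∈ Iic i, f k = ∑ k ∈ range (i + 1), f k := by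
  rw [Nat.range_succ_eq_Iic, ← Fin.map_valEmbedding_Iic, sum_map]
  rfl

theorem sumMatrix_eq_cornerSum {m n : ℕ} {A : Matrix (Fin m) (Fin n) ℤ} {a : ℕ → ℕ → ℤ}
    (hA : ∀ i j, A i j = a i j) (i : Fin m) (j : Fin n) :
    sumMatrix A i j = cornerSum a (i + 1) (j + 1) := by
  simp only [sumMatrix, hA, Fin.sum_Iic_val (a _), cornerSum]
  exact Fin.sum_Iic_val (fun p => ∑ q ∈ range (j + 1), a p q) i

theorem isSRM_iff_sum_col_le_one {m n : ℕ} {A : Matrix (Fin m) (Fin n) ℤ}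
    (h01 : ∀ i j, A i j = 0 ∨ A i j = 1) : IsSRM A ↔ ∀ j, ∑ i, A i j ≤ 1 := by
  have hA0 : ∀ i j, 0 ≤ A i j := fun i j => by rcases h01 i j with h | h <;> simp [h]
  constructor
  · intro hA j
    rcases Nat.eq_zero_or_pos m with rfl | hm
    · simp
    have hlast : Iic (⟨m - 1, by omega⟩ : Fin m) = univ := by
      ext i
      simp only [mem_Iic, Fin.le_def, mem_univ, iff_true]
      omega
    have := hA.2.1 ⟨m - 1, by omega⟩ j
    rw [hlast] at this
    omega
  · intro hcol
    refine ⟨fun i j => (h01 i j).imp_right Or.inl, fun i j => ?_,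
      fun i j => sum_nonneg fun l _ => hA0 i l⟩
    have hle : ∑ k ∈ Iic i, A k j ≤ ∑ k, A k j := sum_le_univ_sum_of_nonneg fun k => hA0 k j
    have := sum_nonneg fun k (_ : k ∈ Iic i) => hA0 k j
    have := hcol j
    omega

section Padding

variable {α : Type*} [Zero α] {m n : ℕ}

def zeroExtend (A : Matrix (Fin m) (Fin n) α) (p q : ℕ) : α :=
  if h : p < m ∧ q < n then A ⟨p, h.1⟩ ⟨q, h.2⟩ else 0

theorem zeroExtend_val (A : Matrix (Fin m) (Fin n) α) (i : Fin m) (j : Fin n) :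
    zeroExtend A i j = A i j := by
  simp [zeroExtend]

def padded (S : Matrix (Fin m) (Fin n) α) (i j : ℕ) : α :=
  if h : 1 ≤ i ∧ i ≤ m ∧ 1 ≤ j ∧ j ≤ n then
    S ⟨i - 1, Nat.sub_one_lt_of_le h.1 h.2.1⟩ ⟨j - 1, Nat.sub_one_lt_of_le h.2.2.1 h.2.2.2⟩
  else 0

theorem padded_zero_left (S : Matrix (Fin m) (Fin n) α) (j : ℕ) : padded S 0 j = 0 :=
  dif_neg (by omega)

theorem padded_zero_right (S : Matrix (Fin m) (Fin n) α) (i : ℕ) : padded S i 0 = 0 :=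
  dif_neg (by omega)

theorem padded_succ_succ (S : Matrix (Fin m) (Fin n) α) (i : Fin m) (j : Fin n) :
    padded S (i + 1) (j + 1) = S i j := by
  simp [padded]

theorem padded_eq_cornerSum_zeroExtend {S A : Matrix (Fin m) (Fin n) ℤ}
    (hsum : ∀ i j, sumMatrix A i j = S i j) {i j : ℕ} (hi : i ≤ m) (hj : j ≤ n) :
    padded S i j = cornerSum (zeroExtend A) i j := by
  rcases i with _ | i
  · simp [padded_zero_left, cornerSum]
  rcases j with _ | j
  · simp [padded_zero_right, cornerSum]
  rw [padded_succ_succ S ⟨i, hi⟩ ⟨j, hj⟩, ← hsum,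
    sumMatrix_eq_cornerSum (zeroExtend_val A · · |>.symm)]

end Padding

theorem exists_zeroOne_isSRM_sumMatrix_eq_iff {m n : ℕ} (S : Matrix (Fin m) (Fin n) ℤ) :
    (∃ A : Matrix (Fin m) (Fin n) ℤ, IsSRM A ∧ (∀ i j, A i j = 0 ∨ A i j = 1) ∧
        ∀ i j, sumMatrix A i j = S i j) ↔
      (∀ p q, p < m → q < n → 0 ≤ mixedDiff (padded S) p q) ∧
        ∀ q, q < n → padded S m (q + 1) - padded S m q ≤ 1 := by
  constructor
  · rintro ⟨A, hA, h01, hsum⟩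
    set a := zeroExtend A
    have hpad : ∀ {i j}, i ≤ m → j ≤ n → padded S i j = cornerSum a i j :=
      padded_eq_cornerSum_zeroExtend hsum
    refine ⟨fun p q hp hq => ?_, fun q hq => ?_⟩
    · have hdiff : mixedDiff (padded S) p q = a p q := by
        rw [← mixedDiff_cornerSum a]
        simp only [mixedDiff]
        rw [hpad hp hq, hpad hp hq.le, hpad hp.le hq, hpad hp.le hq.le]
      rw [hdiff, show a p q = A ⟨p, hp⟩ ⟨q, hq⟩ from zeroExtend_val A ⟨p, hp⟩ ⟨q, hq⟩]
      rcases h01 ⟨p, hp⟩ ⟨q, hq⟩ with h | h <;> simp [h]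
    · rw [hpad le_rfl hq, hpad le_rfl hq.le, cornerSum_succ_right_sub,
        ← Fin.sum_univ_eq_sum_range (a · q)]
      simpa only [a, zeroExtend_val A _ ⟨q, hq⟩] using
        (isSRM_iff_sum_col_le_one h01).1 hA ⟨q, hq⟩
  · rintro ⟨hdiff, hrow⟩
    set a := mixedDiff (padded S)
    have hcol : ∀ q, q < n → ∑ p ∈ range m, a p q ≤ 1 := fun q hq => by
      simpa only [a, sum_range_mixedDiff, padded_zero_left, sub_zero] using hrow q hq
    have h01 : ∀ (i : Fin m) (j : Fin n), a i j = 0 ∨ a i j = 1 := fun i j => by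
      have hle : a i j ≤ ∑ p ∈ range m, a p j :=
        single_le_sum (fun p hp => hdiff p j (mem_range.1 hp) j.2) (mem_range.2 i.2)
      have := hdiff i j i.2 j.2
      have := hcol j j.2
      omega
    refine ⟨fun i j => a i j, (isSRM_iff_sum_col_le_one h01).2 fun j => ?_, h01, fun i j => ?_⟩
    · rw [Fin.sum_univ_eq_sum_range (a · j)]
      exact hcol j j.2
    · rw [sumMatrix_eq_cornerSum (fun _ _ => rfl),
        cornerSum_mixedDiff (padded_zero_left S) (padded_zero_right S), padded_succ_succ]

theorem forall_mixedDiff_nonneg_iff (s : ℕ → ℕ → ℤ) (m n : ℕ) :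
    (∀ p q, p < m → q < n → 0 ≤ mixedDiff s p q) ↔
      ∀ i j, 1 ≤ i → i ≤ m → 1 ≤ j → j ≤ n →
        s i (j - 1) + s (i - 1) j - s (i - 1) (j - 1) ≤ s i j := by
  constructor
  · intro h i j hi him hj hjn
    obtain ⟨p, rfl⟩ := Nat.exists_eq_add_of_le' hi
    obtain ⟨q, rfl⟩ := Nat.exists_eq_add_of_le' hj
    have := h p q him hjn
    simp only [mixedDiff, Nat.add_sub_cancel] at this ⊢
    linarith
  · intro h p q hp hq
    have := h (p + 1) (q + 1) (by omega) hp (by omega) hq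
    simp only [mixedDiff, Nat.add_sub_cancel] at this ⊢
    linarith

theorem forall_succ_sub_le_one_iff (f : ℕ → ℤ) (n : ℕ) :
    (∀ q, q < n → f (q + 1) - f q ≤ 1) ↔ ∀ j, 1 ≤ j → j ≤ n → f j ≤ f (j - 1) + 1 := by
  constructor
  · intro h j hj hjn
    obtain ⟨q, rfl⟩ := Nat.exists_eq_add_of_le' hj
    have := h q hjn
    simp only [Nat.add_sub_cancel]
    linarith
  · intro h q hq
    have := h (q + 1) (by omega) hq
    simp only [Nat.add_sub_cancel] at this
    linarith

/-- characterization of the sum-matrices of matrices in S⁺_{m,n}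
(the (0,1)-SRMs, i.e. (0,1)-matrices with at most one 1 per column).
Here pad gives the 1-indexed entries s_{ij} with the convention s_{0j} = s_{i0} = 0. -/
theorem stmt14 (m n : ℕ) (S : Matrix (Fin m) (Fin n) ℤ) :
    (∃ A : Matrix (Fin m) (Fin n) ℤ, IsSRM A ∧ (∀ i j, A i j = 0 ∨ A i j = 1) ∧
        (∀ i j, sumMatrix A i j = S i j)) ↔
    (let pad : ℕ → ℕ → ℤ := fun i j =>
        if h : 1 ≤ i ∧ i ≤ m ∧ 1 ≤ j ∧ j ≤ n then
          S ⟨i - 1, by omega⟩ ⟨j - 1, by omega⟩ else 0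
     (∀ i j, 1 ≤ i → i ≤ m → 1 ≤ j → j ≤ n →
        pad i (j - 1) + pad (i - 1) j - pad (i - 1) (j - 1) ≤ pad i j) ∧
     (∀ j, 1 ≤ j → j ≤ n → pad m j ≤ pad m (j - 1) + 1)) :=
  (exists_zeroOne_isSRM_sumMatrix_eq_iff S).trans <|
    and_congr (forall_mixedDiff_nonneg_iff _ m n) (forall_succ_sub_le_one_iff _ n)
end

section
/- Let R be a nonnegative integral m-vector with sum n, let S be the all-ones n-vector, and let A, C be (0,1)-matrices with row sum vector R and column sum vector S (so each column has exactly one 1). Then Σ(A) ≥ Σ(C) entrywise if and only if C can be transformed into A by a sequence of Bruhat interchanges. -/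
open Finset

/-- A Bruhat interchange: replace a 2×2 submatrix [[0,1],[1,0]] by the identity I₂. -/
def BruhatInterchange {m n : ℕ} (C D : Matrix (Fin m) (Fin n) ℤ) : Prop :=
  ∃ (i i' : Fin m) (j j' : Fin n), i < i' ∧ j < j' ∧
    C i j = 0 ∧ C i j' = 1 ∧ C i' j = 1 ∧ C i' j' = 0 ∧
    D = fun p q => C p q + (if p = i ∧ q = j then 1 else 0)
      - (if p = i ∧ q = j' then 1 else 0)
      - (if p = i' ∧ q = j then 1 else 0) + (if p = i' ∧ q = j' then 1 else 0)

/-!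
A (0,1)-matrix with all column sums 1 is `colMatrix f`, where `f` sends each column to the row
of its 1, and `Σ(colMatrix f) i j` counts the columns `q ≤ j` with `f q ≤ i`. An interchange at
rows `i < i'` and columns `j < j'` adds 1 to `Σ` exactly on the rectangle `[i, i') × [j, j')`,
which gives the easy direction.

Conversely let `Σ(colMatrix f) ≤ Σ(colMatrix g)` with `f ≠ g`, and let `j` be the first column
where they differ. Dominance at column `j` forces `g j < f j`, and since the row sums agree some
later column has its 1 in the rows `[g j, f j)`; let `j'` be the first one. Swapping the columns
`j` and `j'` of `colMatrix f` is an interchange whose rectangle lies where `Σ(colMatrix f)` is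
strictly below `Σ(colMatrix g)`, so dominance survives while `∑ Σ` strictly increases, and we
induct on the gap.
-/

section

variable {m n : ℕ}

def bruhatMove (C : Matrix (Fin m) (Fin n) ℤ) (i i' : Fin m) (j j' : Fin n) :
    Matrix (Fin m) (Fin n) ℤ :=
  fun p q => C p q + (if p = i ∧ q = j then 1 else 0)
      - (if p = i ∧ q = j' then 1 else 0)
      - (if p = i' ∧ q = j then 1 else 0) + (if p = i' ∧ q = j' then 1 else 0)

lemma sum_Iic_sum_Iic_ite_and (i₀ i : Fin m) (j₀ j : Fin n) :
    ∑ p ∈ Iic i, ∑ q ∈ Iic j, (if p = i₀ ∧ q = j₀ then (1 : ℤ) else 0) =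
      if i₀ ≤ i ∧ j₀ ≤ j then 1 else 0 := by
  simp [ite_and, sum_ite_eq']

lemma sumMatrix_bruhatMove (C : Matrix (Fin m) (Fin n) ℤ) {i i' : Fin m} {j j' : Fin n}
    (hi : i < i') (hj : j < j') (p : Fin m) (q : Fin n) :
    sumMatrix (bruhatMove C i i' j j') p q =
      sumMatrix C p q + if i ≤ p ∧ p < i' ∧ j ≤ q ∧ q < j' then 1 else 0 := by
  simp only [sumMatrix, bruhatMove, sum_add_distrib, sum_sub_distrib, sum_Iic_sum_Iic_ite_and]
  split_ifs <;> omega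

namespace BruhatInterchange

variable {C D : Matrix (Fin m) (Fin n) ℤ}

lemma exists_eq_bruhatMove (h : BruhatInterchange C D) :
    ∃ (i i' : Fin m) (j j' : Fin n), i < i' ∧ j < j' ∧ D = bruhatMove C i i' j j' := by
  obtain ⟨i, i', j, j', hi, hj, -, -, -, -, rfl⟩ := h
  exact ⟨i, i', j, j', hi, hj, rfl⟩

lemma sumMatrix_le (h : BruhatInterchange C D) (p : Fin m) (q : Fin n) :
    sumMatrix C p q ≤ sumMatrix D p q := by
  obtain ⟨i, i', j, j', hi, hj, rfl⟩ := h.exists_eq_bruhatMove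
  rw [sumMatrix_bruhatMove C hi hj]
  split_ifs <;> omega

lemma sum_sumMatrix_lt (h : BruhatInterchange C D) :
    ∑ p, ∑ q, sumMatrix C p q < ∑ p, ∑ q, sumMatrix D p q := by
  obtain ⟨i, i', j, j', hi, hj, rfl⟩ := h.exists_eq_bruhatMove
  have hcorner : sumMatrix C i j < sumMatrix (bruhatMove C i i' j j') i j := by
    rw [sumMatrix_bruhatMove C hi hj, if_pos ⟨le_rfl, hi, le_rfl, hj⟩]
    omega
  refine sum_lt_sum (fun p _ => sum_le_sum fun q _ => h.sumMatrix_le p q) ⟨i, mem_univ _, ?_⟩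
  exact sum_lt_sum (fun q _ => h.sumMatrix_le i q) ⟨j, mem_univ _, hcorner⟩

end BruhatInterchange

lemma Relation.ReflTransGen.sumMatrix_le {C D : Matrix (Fin m) (Fin n) ℤ}
    (h : Relation.ReflTransGen BruhatInterchange C D) (p : Fin m) (q : Fin n) :
    sumMatrix C p q ≤ sumMatrix D p q := by
  induction h with
  | refl => exact le_rfl
  | tail _ hstep ih => exact ih.trans (hstep.sumMatrix_le p q)

def colMatrix (f : Fin n → Fin m) : Matrix (Fin m) (Fin n) ℤ :=
  fun p q => if p = f q then 1 else 0

lemma exists_eq_colMatrix {C : Matrix (Fin m) (Fin n) ℤ} (h01 : ∀ i j, C i j = 0 ∨ C i j = 1)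
    (hcol : ∀ j, ∑ i, C i j = 1) : ∃ f : Fin n → Fin m, C = colMatrix f := by
  have hcolumn : ∀ q, ∃ i, ∀ p, C p q = if p = i then 1 else 0 := by
    intro q
    obtain ⟨i, -, hi⟩ := exists_ne_zero_of_sum_ne_zero (hcol q ▸ one_ne_zero : ∑ p, C p q ≠ 0)
    have hi1 : C i q = 1 := (h01 i q).resolve_left hi
    have hrest : ∑ p ∈ univ.erase i, C p q = 0 := by
      have := add_sum_erase univ (C · q) (mem_univ i)
      rw [hcol, hi1] at this
      omega
    have hnonneg : ∀ p ∈ univ.erase i, 0 ≤ C p q := fun p _ => by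
      rcases h01 p q with h | h <;> omega
    refine ⟨i, fun p => ?_⟩
    split_ifs with hp
    · rwa [hp]
    · exact (sum_eq_zero_iff_of_nonneg hnonneg).1 hrest p (mem_erase.2 ⟨hp, mem_univ p⟩)
  choose f hf using hcolumn
  exact ⟨f, funext₂ fun p q => hf q p⟩

lemma sum_sum_colMatrix (f : Fin n → Fin m) (S : Finset (Fin m)) (T : Finset (Fin n)) :
    ∑ p ∈ S, ∑ q ∈ T, colMatrix f p q = #{q ∈ T | f q ∈ S} := by
  simp only [colMatrix]
  rw [sum_comm]
  simp [sum_ite_eq']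

lemma sum_colMatrix_comp_perm (f : Fin n → Fin m) (σ : Equiv.Perm (Fin n)) (p : Fin m) :
    ∑ q, colMatrix (f ∘ σ) p q = ∑ q, colMatrix f p q :=
  Equiv.sum_comp σ (colMatrix f p)

lemma colMatrix_comp_swap (f : Fin n → Fin m) {j j' : Fin n} (hj : j < j') (hf : f j' < f j) :
    colMatrix (f ∘ Equiv.swap j j') = bruhatMove (colMatrix f) (f j') (f j) j j' := by
  ext p q
  simp only [colMatrix, bruhatMove, Function.comp_apply, Equiv.swap_apply_def]
  split_ifs <;> subst_vars <;> omega

lemma bruhatInterchange_colMatrix_comp_swap (f : Fin n → Fin m) {j j' : Fin n} (hj : j < j')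
    (hf : f j' < f j) : BruhatInterchange (colMatrix f) (colMatrix (f ∘ Equiv.swap j j')) := by
  refine ⟨f j', f j, j, j', hf, hj, ?_, ?_, ?_, ?_, colMatrix_comp_swap f hj hf⟩ <;>
    simp only [colMatrix] <;> split_ifs <;> omega

/-- Levels `p` range over `ℕ` rather than `Fin m`, so that `p = 0` (no rows at all) is allowed. -/
def countLT (f : Fin n → Fin m) (p : ℕ) (s : Finset (Fin n)) : ℕ :=
  #{q ∈ s | (f q : ℕ) < p}

lemma sumMatrix_colMatrix (f : Fin n → Fin m) (i : Fin m) (j : Fin n) :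
    sumMatrix (colMatrix f) i j = countLT f (i + 1) (Iic j) := by
  rw [sumMatrix, sum_sum_colMatrix, countLT]
  congr 2
  exact filter_congr fun q _ => by rw [mem_Iic]; omega

lemma countLT_univ_eq_of_sum_colMatrix_eq {f g : Fin n → Fin m}
    (hrow : ∀ i, ∑ q, colMatrix f i q = ∑ q, colMatrix g i q) (p : ℕ) :
    countLT f p univ = countLT g p univ := by
  have hcount : ∀ h : Fin n → Fin m,
      (countLT h p univ : ℤ) = ∑ i ∈ {i : Fin m | (i : ℕ) < p}, ∑ q, colMatrix h i q := by
    intro h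
    simp [sum_sum_colMatrix, countLT]
  exact_mod_cast (hcount f).trans ((sum_congr rfl fun i _ => hrow i).trans (hcount g).symm)

lemma countLT_Iic_le_of_sumMatrix_le {f g : Fin n → Fin m}
    (hdom : ∀ i j, sumMatrix (colMatrix f) i j ≤ sumMatrix (colMatrix g) i j)
    (p : ℕ) (j : Fin n) : countLT f p (Iic j) ≤ countLT g p (Iic j) := by
  have hcap : ∀ h : Fin n → Fin m, countLT h p (Iic j) = countLT h (min p m) (Iic j) :=
    fun h => congrArg card <| filter_congr fun q _ => by have := (h q).isLt; omega
  rw [hcap f, hcap g]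
  obtain h0 | hpos := Nat.eq_zero_or_pos (min p m)
  · simp [countLT, h0]
  · have := hdom ⟨min p m - 1, by omega⟩ j
    rwa [sumMatrix_colMatrix, sumMatrix_colMatrix, Nat.sub_add_cancel hpos, Nat.cast_le] at this

lemma countLT_mono (f : Fin n → Fin m) {p p' : ℕ} (h : p ≤ p') (s : Finset (Fin n)) :
    countLT f p s ≤ countLT f p' s :=
  card_le_card <| monotone_filter_right s fun _ _ hq => lt_of_lt_of_le hq h

lemma countLT_union (f : Fin n → Fin m) (p : ℕ) {s t : Finset (Fin n)} (h : Disjoint s t) :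
    countLT f p (s ∪ t) = countLT f p s + countLT f p t := by
  rw [countLT, filter_union, card_union_of_disjoint (disjoint_filter_filter h)]
  rfl

lemma countLT_Iic_eq_add (f : Fin n → Fin m) (p : ℕ) {j q : Fin n} (h : j ≤ q) :
    countLT f p (Iic q) = countLT f p (Iic j) + countLT f p (Ioc j q) := by
  rw [← Iic_union_Ioc_eq_Iic h, countLT_union f p (Iic_disjoint_Ioc le_rfl)]

lemma countLT_univ_eq_add (f : Fin n → Fin m) (p : ℕ) (j : Fin n) :
    countLT f p univ = countLT f p (Iic j) + countLT f p (Ioi j) := by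
  have hunion : Iic j ∪ Ioi j = univ := by ext q; simp [le_or_gt]
  have hdisj : Disjoint (Iic j) (Ioi j) := disjoint_left.2 fun q h1 h2 => by
    rw [mem_Iic] at h1; rw [mem_Ioi] at h2; omega
  rw [← countLT_union f p hdisj, hunion]

lemma exists_mem_of_countLT_lt {f : Fin n → Fin m} {p p' : ℕ} {s : Finset (Fin n)}
    (h : countLT f p s < countLT f p' s) : ∃ q ∈ s, p ≤ f q ∧ (f q : ℕ) < p' := by
  by_contra! hno
  refine h.not_ge (card_le_card fun q hq => ?_)
  rw [mem_filter] at hq ⊢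
  exact ⟨hq.1, by have := hno q hq.1; omega⟩

lemma countLT_Iic_add_of_eqOn_Iio {f g : Fin n → Fin m} {j : Fin n} (hj : ∀ t < j, f t = g t)
    (p : ℕ) :
    countLT f p (Iic j) + (if (g j : ℕ) < p then 1 else 0) =
      countLT g p (Iic j) + (if (f j : ℕ) < p then 1 else 0) := by
  have hIio : countLT f p (Iio j) = countLT g p (Iio j) :=
    congrArg card <| filter_congr fun t ht => by rw [hj t (mem_Iio.1 ht)]
  have hsplit : ∀ h : Fin n → Fin m,
      countLT h p (Iic j) = countLT h p (Iio j) + if (h j : ℕ) < p then 1 else 0 := by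
    intro h
    rw [← Iio_insert, countLT, countLT, filter_insert]
    split_ifs <;> simp [card_insert_of_notMem]
  rw [hsplit f, hsplit g, hIio]
  omega

lemma exists_ne_and_forall_lt_eq {f g : Fin n → Fin m} (hne : f ≠ g) :
    ∃ j, f j ≠ g j ∧ ∀ t < j, f t = g t := by
  obtain ⟨j, hj, hmin⟩ := WellFounded.has_min wellFounded_lt {j | f j ≠ g j}
    (Function.ne_iff.1 hne)
  exact ⟨j, hj, fun t ht => by_contra fun h => hmin t h ht⟩

lemma exists_gt_between {f g : Fin n → Fin m} (htot : ∀ p, countLT f p univ = countLT g p univ)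
    {j : Fin n} (hj : ∀ t < j, f t = g t) (hgf : g j < f j) :
    ∃ t > j, g j ≤ f t ∧ f t < f j := by
  -- The rows `[g j, f j)` hold as many 1s of `f` as of `g`, but among the columns `≤ j` one fewer.
  have hlow := countLT_Iic_add_of_eqOn_Iio hj (g j)
  have hhigh := countLT_Iic_add_of_eqOn_Iio hj (f j)
  have hmono := countLT_mono g hgf.le (Ioi j)
  have hf₁ := countLT_univ_eq_add f (g j) j
  have hf₂ := countLT_univ_eq_add f (f j) j
  have hg₁ := countLT_univ_eq_add g (g j) j
  have hg₂ := countLT_univ_eq_add g (f j) j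
  have ht₁ := htot (g j)
  have ht₂ := htot (f j)
  obtain ⟨t, ht, hband⟩ := exists_mem_of_countLT_lt (f := f) (s := Ioi j) (p := g j) (p' := f j)
    (by split_ifs at hlow hhigh <;> omega)
  exact ⟨t, mem_Ioi.1 ht, hband⟩

lemma exists_rectangle_countLT_lt {f g : Fin n → Fin m}
    (hdom : ∀ p j, countLT f p (Iic j) ≤ countLT g p (Iic j))
    (htot : ∀ p, countLT f p univ = countLT g p univ) (hne : f ≠ g) :
    ∃ j j', j < j' ∧ f j' < f j ∧ ∀ (p : ℕ) (q : Fin n), f j' < p → p ≤ f j → j ≤ q → q < j' →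
      countLT f p (Iic q) < countLT g p (Iic q) := by
  obtain ⟨j, hjne, hj⟩ := exists_ne_and_forall_lt_eq hne
  have hfirst := countLT_Iic_add_of_eqOn_Iio hj
  have hgf : g j < f j := by
    have h₁ := hfirst (f j + 1)
    have h₂ := hdom (f j + 1) j
    split_ifs at h₁ <;> omega
  obtain ⟨j', ⟨hj', hband⟩, hmin⟩ := WellFounded.has_min wellFounded_lt
    {t | j < t ∧ g j ≤ f t ∧ f t < f j} (exists_gt_between htot hj hgf)
  refine ⟨j, j', hj', hband.2, fun p q hp₁ hp₂ hq₁ hq₂ => ?_⟩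
  -- by minimality of `j'`, no column in `(j, q]` has its 1 in the rows `[g j, f j)`
  have hskip : countLT f p (Ioc j q) = countLT f (g j) (Ioc j q) :=
    congrArg card <| filter_congr fun t ht => by
      have ht' := mem_Ioc.1 ht
      have : ¬(g j ≤ f t ∧ f t < f j) := fun hband =>
        hmin t ⟨ht'.1, hband⟩ (ht'.2.trans_lt hq₂)
      omega
  have hf₁ := countLT_Iic_eq_add f p hq₁
  have hg₁ := countLT_Iic_eq_add g p hq₁
  have hf₂ := countLT_Iic_eq_add f (g j) hq₁
  have hg₂ := countLT_Iic_eq_add g (g j) hq₁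
  have hmono := countLT_mono g (show (g j : ℕ) ≤ p by omega) (Ioc j q)
  have hle := hdom (g j) q
  have h₁ := hfirst p
  have h₂ := hfirst (g j)
  split_ifs at h₁ h₂ <;> omega

lemma exists_bruhatInterchange_colMatrix_comp_swap {f g : Fin n → Fin m}
    (hrow : ∀ i, ∑ q, colMatrix f i q = ∑ q, colMatrix g i q)
    (hdom : ∀ i j, sumMatrix (colMatrix f) i j ≤ sumMatrix (colMatrix g) i j) (hne : f ≠ g) :
    ∃ j j', BruhatInterchange (colMatrix f) (colMatrix (f ∘ Equiv.swap j j')) ∧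
      ∀ i q, sumMatrix (colMatrix (f ∘ Equiv.swap j j')) i q ≤ sumMatrix (colMatrix g) i q := by
  obtain ⟨j, j', hj, hf, hrect⟩ := exists_rectangle_countLT_lt
    (countLT_Iic_le_of_sumMatrix_le hdom) (countLT_univ_eq_of_sum_colMatrix_eq hrow) hne
  refine ⟨j, j', bruhatInterchange_colMatrix_comp_swap f hj hf, fun i q => ?_⟩
  rw [colMatrix_comp_swap f hj hf, sumMatrix_bruhatMove _ hf hj]
  split_ifs with h
  · have := hrect (i + 1) q (by omega) (by omega) h.2.2.1 h.2.2.2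
    rw [sumMatrix_colMatrix, sumMatrix_colMatrix]
    omega
  · simpa using hdom i q

theorem reflTransGen_colMatrix_of_sumMatrix_le {f g : Fin n → Fin m}
    (hrow : ∀ i, ∑ q, colMatrix f i q = ∑ q, colMatrix g i q)
    (hdom : ∀ i j, sumMatrix (colMatrix f) i j ≤ sumMatrix (colMatrix g) i j) :
    Relation.ReflTransGen BruhatInterchange (colMatrix f) (colMatrix g) := by
  induction hgap : (∑ i, ∑ j, sumMatrix (colMatrix g) i j -
      ∑ i, ∑ j, sumMatrix (colMatrix f) i j).toNat using Nat.strong_induction_on generalizing f with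
  | _ N ih =>
  obtain rfl | hne := eq_or_ne f g
  · exact .refl
  obtain ⟨j, j', hstep, hdom'⟩ := exists_bruhatInterchange_colMatrix_comp_swap hrow hdom hne
  have hlt := hstep.sum_sumMatrix_lt
  have hle := sum_le_sum fun i (_ : i ∈ univ) => sum_le_sum fun q (_ : q ∈ univ) => hdom' i q
  exact .head hstep (ih _ (by omega)
    (fun i => (sum_colMatrix_comp_perm f _ i).trans (hrow i)) hdom' rfl)

end

theorem stmt15_general (m n : ℕ) (R : Fin m → ℤ)
    (A C : Matrix (Fin m) (Fin n) ℤ)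
    (hA01 : ∀ i j, A i j = 0 ∨ A i j = 1) (hC01 : ∀ i j, C i j = 0 ∨ C i j = 1)
    (hAR : ∀ i, ∑ j, A i j = R i) (hCR : ∀ i, ∑ j, C i j = R i)
    (hAS : ∀ j, ∑ i, A i j = 1) (hCS : ∀ j, ∑ i, C i j = 1) :
    (∀ i j, sumMatrix C i j ≤ sumMatrix A i j) ↔
      Relation.ReflTransGen BruhatInterchange C A := by
  refine ⟨fun hdom => ?_, fun h => h.sumMatrix_le⟩
  obtain ⟨f, rfl⟩ := exists_eq_colMatrix hC01 hCS
  obtain ⟨g, rfl⟩ := exists_eq_colMatrix hA01 hAS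
  exact reflTransGen_colMatrix_of_sumMatrix_le (fun i => (hCR i).trans (hAR i).symm) hdom

/-- for (0,1)-matrices A, C with row sum vector R (of total sum n) and all
column sums 1, Σ(A) ≥ Σ(C) entrywise iff C can be transformed into A by Bruhat
interchanges. -/
theorem stmt15 (m n : ℕ) (R : Fin m → ℤ) (hR : ∀ i, 0 ≤ R i) (hRsum : ∑ i, R i = n)
    (A C : Matrix (Fin m) (Fin n) ℤ)
    (hA01 : ∀ i j, A i j = 0 ∨ A i j = 1) (hC01 : ∀ i j, C i j = 0 ∨ C i j = 1)
    (hAR : ∀ i, ∑ j, A i j = R i) (hCR : ∀ i, ∑ j, C i j = R i)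
    (hAS : ∀ j, ∑ i, A i j = 1) (hCS : ∀ j, ∑ i, C i j = 1) :
    (∀ i j, sumMatrix C i j ≤ sumMatrix A i j) ↔
      Relation.ReflTransGen BruhatInterchange C A :=
  stmt15_general m n R A C hA01 hC01 hAR hCR hAS hCS
end

section
/- The set of extreme points of the polytope P_{m,n}, defined as the convex hull of the m × n sign-restricted matrices, is exactly the set S_{m,n} of m × n sign-restricted matrices. -/
open Finset

/-- A real sign-restricted matrix: entries in {0,1,-1}, each partial column sum (from the
top) equals 0 or 1, and each partial row sum (from the left) is nonnegative. -/
def IsSRMReal {m n : ℕ} (A : Matrix (Fin m) (Fin n) ℝ) : Prop :=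
  (∀ i j, A i j = 0 ∨ A i j = 1 ∨ A i j = -1) ∧
  (∀ i j, (∑ k ∈ Finset.Iic i, A k j) = 0 ∨ (∑ k ∈ Finset.Iic i, A k j) = 1) ∧
  (∀ i j, 0 ≤ ∑ l ∈ Finset.Iic j, A i l)

/-!
The partial column sums `X ↦ (∑_{k ≤ i} X k j)_{i,j}` form an injective linear map. It sends
every sign-restricted matrix to a `0/1` array, hence `P_{m,n}` into the unit cube and each
`A ∈ S_{m,n}` to a vertex of that cube. A segment through `A` inside `P_{m,n}` maps to a segment
through a vertex inside the cube, so it is constant, and by injectivity so is the original one.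
-/

theorem mem_extremePoints_of_injective_of_mapsTo {𝕜 E F : Type*} [Semiring 𝕜] [PartialOrder 𝕜]
    [AddCommMonoid E] [AddCommMonoid F] [Module 𝕜 E] [Module 𝕜 F] {f : E →ₗ[𝕜] F}
    (hf : Function.Injective f) {K : Set E} {C : Set F} (hKC : Set.MapsTo f K C) {x : E}
    (hx : x ∈ K) (hfx : f x ∈ C.extremePoints 𝕜) : x ∈ K.extremePoints 𝕜 := by
  refine ⟨hx, fun x₁ hx₁ x₂ hx₂ hseg ↦ ?_⟩
  obtain ⟨a, b, ha, hb, hab, hsum⟩ := hseg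
  have hseg : f x ∈ openSegment 𝕜 (f x₁) (f x₂) :=
    ⟨a, b, ha, hb, hab, by rw [← hsum, map_add, map_smul, map_smul]⟩
  exact hf (hfx.2 (hKC hx₁) (hKC hx₂) hseg)

theorem partialSums_injective {ι M : Type*} [LinearOrder ι] [WellFoundedLT ι]
    [LocallyFiniteOrderBot ι] [AddCancelCommMonoid M] :
    Function.Injective fun (x : ι → M) i ↦ ∑ k ∈ Iic i, x k := by
  intro x y hxy
  funext i
  induction i using WellFoundedLT.induction with
  | _ i ih =>
    have hlt : ∑ k ∈ Iio i, x k = ∑ k ∈ Iio i, y k :=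
      sum_congr rfl fun k hk ↦ ih k (mem_Iio.mp hk)
    have hle := congrFun hxy i
    simp only [Iic_eq_cons_Iio, sum_cons, hlt] at hle
    exact add_right_cancel hle

variable {m n : ℕ}

def partialColSums : Matrix (Fin m) (Fin n) ℝ →ₗ[ℝ] Fin m → Fin n → ℝ where
  toFun X i j := ∑ k ∈ Iic i, X k j
  map_add' X Y := by ext; simp [sum_add_distrib]
  map_smul' c X := by ext; simp [mul_sum]

theorem partialColSums_injective : Function.Injective (partialColSums (m := m) (n := n)) := by
  intro X Y hXY
  ext i j
  have := partialSums_injective (funext fun i ↦ congrFun (congrFun hXY i) j)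
  exact congrFun this i

def unitCube (m n : ℕ) : Set (Fin m → Fin n → ℝ) :=
  Set.univ.pi fun _ ↦ Set.univ.pi fun _ ↦ Set.Icc 0 1

theorem partialColSums_mem_extremePoints_unitCube {A : Matrix (Fin m) (Fin n) ℝ}
    (hA : IsSRMReal A) : partialColSums A ∈ (unitCube m n).extremePoints ℝ := by
  simp only [unitCube, extremePoints_pi, Set.extremePoints_Icc zero_le_one]
  exact fun i _ j _ ↦ hA.2.1 i j

theorem mapsTo_partialColSums_convexHull :
    Set.MapsTo partialColSums (convexHull ℝ {A : Matrix (Fin m) (Fin n) ℝ | IsSRMReal A})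
      (unitCube m n) :=
  convexHull_min
    (fun _ hA ↦ Set.mem_preimage.2 <| extremePoints_subset <|
      partialColSums_mem_extremePoints_unitCube hA)
    ((convex_pi fun _ _ ↦ convex_pi fun _ _ ↦ convex_Icc 0 1).linear_preimage partialColSums)

/-- the extreme points of the polytope P_{m,n} = conv(S_{m,n}) are exactly
the sign-restricted matrices. -/
theorem stmt17 (m n : ℕ) :
    Set.extremePoints ℝ (convexHull ℝ {A : Matrix (Fin m) (Fin n) ℝ | IsSRMReal A}) =
      {A : Matrix (Fin m) (Fin n) ℝ | IsSRMReal A} :=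
  extremePoints_convexHull_subset.antisymm fun _ hA ↦
    mem_extremePoints_of_injective_of_mapsTo partialColSums_injective
      mapsTo_partialColSums_convexHull (subset_convexHull ℝ _ hA)
      (partialColSums_mem_extremePoints_unitCube hA)
end
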